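/- arXiv:1803.07296 — 7 statements merged into one kernel-verified Lean document; each statement's English description precedes it below -/
import Mathlib

section
/- (Lemma 2.2) Let α ∈ [1,2) and let ϑ ∈ H¹_α(0,1). Then lim_{x→0⁺} x |ϑ(x)|² = 0. -/
open MeasureTheory Set Filter
open scoped ENNReal

noncomputable section

/-- `f` is locally absolutely continuous on `(0,1)` with (a.e.) derivative `g`:
on every compact subinterval of `(0,1)`, `g` is integrable and the
fundamental theorem of calculus holds. -/
def LocACOn (f g : ℝ → ℝ) : Prop :=
  ∀ a b : ℝ, 0 < a → a ≤ b → b < 1 →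
    IntervalIntegrable g volume a b ∧ f b - f a = ∫ x in a..b, g x

/-- `ϑ ∈ H¹_α(0,1)`, with `g` its derivative: `ϑ ∈ L²(0,1)`, `ϑ` locally absolutely
continuous on `(0,1)`, `∫ x^α |ϑ'|² < ∞` and `ϑ(1) = 0`. -/
def MemH1α (α : ℝ) (ϑ g : ℝ → ℝ) : Prop :=
  (∫⁻ x in Ioo (0:ℝ) 1, ENNReal.ofReal ((ϑ x) ^ 2) < ⊤) ∧
  LocACOn ϑ g ∧
  (∫⁻ x in Ioo (0:ℝ) 1, ENNReal.ofReal (x ^ α * (g x) ^ 2) < ⊤) ∧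
  Tendsto ϑ (nhdsWithin 1 (Iio 1)) (nhds 0)

/-- Lemma 2.2: for `α ∈ [1,2)` and `ϑ ∈ H¹_α(0,1)`, `x |ϑ(x)|² → 0` as `x → 0⁺`. -/
theorem boundary_vanishing
    (α : ℝ) (hα : α ∈ Ico (1:ℝ) 2)
    (ϑ g : ℝ → ℝ) (hϑ : MemH1α α ϑ g) :
    Tendsto (fun x => x * (ϑ x) ^ 2) (nhdsWithin 0 (Ioi 0)) (nhds 0) := by
  obtain ⟨-, hAC, hMfin, -⟩ := hϑ
  have hα1 : (1:ℝ) ≤ α := hα.1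
  have hα2 : α < 2 := hα.2
  set β : ℝ := (α + 2) / 2 with hβdef
  have hβ1 : 1 < β := by rw [hβdef]; linarith
  have hβ2 : β < 2 := by rw [hβdef]; linarith
  have hαβ : α ≤ β := by rw [hβdef]; linarith
  set M : ℝ := (∫⁻ x in Ioo (0:ℝ) 1, ENNReal.ofReal (x ^ α * (g x) ^ 2)).toReal with hMdef
  have hM0 : 0 ≤ M := ENNReal.toReal_nonneg
  set A : ℝ := |ϑ (1/2)| with hAdef
  have hA0 : 0 ≤ A := abs_nonneg _
  set C : ℝ := M / 2 + 1 / (2 * (β - 1)) with hCdef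
  have hC0 : 0 ≤ C := by
    have h1 : (0:ℝ) < β - 1 := by linarith
    have h2 : (0:ℝ) ≤ 1 / (2 * (β - 1)) := by positivity
    rw [hCdef]; linarith
  -- the key pointwise estimate
  have key : ∀ x : ℝ, x ∈ Ioc (0:ℝ) (1/2) →
      Real.sqrt x * |ϑ x| ≤ A * Real.sqrt x + C * x ^ ((2 - β)/2) := by
    rintro x ⟨hx0, hx12⟩
    set ε : ℝ := x ^ ((1 - β)/2) with hεdef
    have hε0 : 0 < ε := Real.rpow_pos_of_pos hx0 _
    obtain ⟨hgInt, hFTC⟩ := hAC x (1/2) hx0 hx12 (by norm_num)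
    have hsub : Ioc x (1/2) ⊆ Ioo (0:ℝ) 1 := fun t ht =>
      ⟨hx0.trans ht.1, lt_of_le_of_lt ht.2 (by norm_num)⟩
    have hgm : AEStronglyMeasurable g (volume.restrict (Ioc x (1/2))) :=
      hgInt.1.aestronglyMeasurable
    have hfm : AEStronglyMeasurable (fun t => t ^ α * g t ^ 2)
        (volume.restrict (Ioc x (1/2))) := by
      refine AEStronglyMeasurable.mul ?_ ?_
      · exact (Real.continuous_rpow_const (by linarith)).aestronglyMeasurable
      · exact (hgm.aemeasurable.pow_const 2).aestronglyMeasurable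
    have hnn : 0 ≤ᵐ[volume.restrict (Ioc x (1/2))] fun t => t ^ α * g t ^ 2 := by
      filter_upwards [ae_restrict_mem measurableSet_Ioc] with t ht
      exact mul_nonneg (Real.rpow_nonneg (hx0.trans ht.1).le _) (sq_nonneg _)
    have hfin : ∫⁻ t in Ioc x (1/2), ENNReal.ofReal (t ^ α * g t ^ 2) < ⊤ :=
      lt_of_le_of_lt (lintegral_mono_set hsub) hMfin
    have hfInt : IntegrableOn (fun t => t ^ α * g t ^ 2) (Ioc x (1/2)) := by
      refine ⟨hfm, ?_⟩
      rw [hasFiniteIntegral_iff_ofReal hnn]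
      exact hfin
    have hI1 : ∫ t in Ioc x (1/2), t ^ α * g t ^ 2 ≤ M := by
      rw [MeasureTheory.integral_eq_lintegral_of_nonneg_ae hnn hfm]
      exact ENNReal.toReal_mono hMfin.ne (lintegral_mono_set hsub)
    have hfIntI : IntervalIntegrable (fun t => t ^ α * g t ^ 2) volume x (1/2) :=
      (intervalIntegrable_iff_integrableOn_Ioc_of_le hx12).2 hfInt
    have hI1' : ∫ t in x..(1/2), t ^ α * g t ^ 2 ≤ M := by
      rw [intervalIntegral.integral_of_le hx12]; exact hI1
    have h0not : (0:ℝ) ∉ Set.uIcc x (1/2:ℝ) := Set.notMem_uIcc_of_lt hx0 (by norm_num)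
    have hrpowInt : IntervalIntegrable (fun t => t ^ (-β)) volume x (1/2) :=
      intervalIntegral.intervalIntegrable_rpow (Or.inr h0not)
    have hI2 : ∫ t in x..(1/2), t ^ (-β) ≤ x ^ (1 - β) / (β - 1) := by
      have hne : -β ≠ -1 := by
        intro h
        rw [neg_inj] at h
        exact (ne_of_gt hβ1) h
      rw [integral_rpow (Or.inr ⟨hne, h0not⟩)]
      have h12 : (0:ℝ) ≤ ((1:ℝ)/2) ^ (-β + 1) := Real.rpow_nonneg (by norm_num) _
      have hx' : (0:ℝ) ≤ x ^ (-β + 1) := Real.rpow_nonneg hx0.le _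
      have hb : (0:ℝ) < β - 1 := by linarith
      have heq : (((1:ℝ)/2) ^ (-β + 1) - x ^ (-β + 1)) / (-β + 1)
          = (x ^ (-β + 1) - ((1:ℝ)/2) ^ (-β + 1)) / (β - 1) := by
        rw [div_eq_div_iff (by linarith) (by linarith)]; ring
      have h1β : x ^ (-β + 1) = x ^ (1 - β) := by congr 1; ring
      rw [heq, h1β]
      have hle : x ^ (1 - β) - ((1:ℝ)/2) ^ (-β + 1) ≤ x ^ (1 - β) := by linarith
      exact (div_le_div_iff_of_pos_right hb).mpr hle
    -- pointwise AM-GM bound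
    have hpt : ∀ t ∈ Icc x (1/2:ℝ), |g t| ≤ ε/2 * (t ^ α * g t ^ 2) + ε⁻¹/2 * t ^ (-β) := by
      intro t ht
      have ht0 : 0 < t := lt_of_lt_of_le hx0 ht.1
      have ht1 : t ≤ 1 := le_trans ht.2 (by norm_num)
      have htα : (0:ℝ) < t ^ α := Real.rpow_pos_of_pos ht0 _
      have htα' : (0:ℝ) < t ^ (-α) := Real.rpow_pos_of_pos ht0 _
      have hεinv : (0:ℝ) < ε⁻¹ := inv_pos.mpr hε0
      have hprod : (ε * t ^ α) * (ε⁻¹ * t ^ (-α)) = 1 := by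
        have h1 : t ^ α * t ^ (-α) = 1 := by
          rw [← Real.rpow_add ht0]; simp
        have h2 : ε * ε⁻¹ = 1 := mul_inv_cancel₀ hε0.ne'
        calc (ε * t ^ α) * (ε⁻¹ * t ^ (-α)) = (ε * ε⁻¹) * (t ^ α * t ^ (-α)) := by ring
          _ = 1 := by rw [h1, h2, mul_one]
      have hamgm := two_mul_le_add_sq (Real.sqrt (ε * t ^ α) * |g t|)
          (Real.sqrt (ε⁻¹ * t ^ (-α)))
      have hs1 : Real.sqrt (ε * t ^ α) * Real.sqrt (ε⁻¹ * t ^ (-α)) = 1 := by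
        rw [← Real.sqrt_mul (mul_nonneg hε0.le htα.le), hprod, Real.sqrt_one]
      have hl : 2 * (Real.sqrt (ε * t ^ α) * |g t|) * Real.sqrt (ε⁻¹ * t ^ (-α))
          = 2 * |g t| := by
        calc 2 * (Real.sqrt (ε * t ^ α) * |g t|) * Real.sqrt (ε⁻¹ * t ^ (-α))
            = 2 * |g t| * (Real.sqrt (ε * t ^ α) * Real.sqrt (ε⁻¹ * t ^ (-α))) := by ring
          _ = 2 * |g t| := by rw [hs1, mul_one]
      have hsq1 : (Real.sqrt (ε * t ^ α) * |g t|) ^ 2 = ε * (t ^ α * g t ^ 2) := by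
        rw [mul_pow, Real.sq_sqrt (mul_nonneg hε0.le htα.le), sq_abs]; ring
      have hsq2 : (Real.sqrt (ε⁻¹ * t ^ (-α))) ^ 2 = ε⁻¹ * t ^ (-α) :=
        Real.sq_sqrt (mul_nonneg hεinv.le htα'.le)
      have hmono : t ^ (-α) ≤ t ^ (-β) :=
        Real.rpow_le_rpow_of_exponent_ge ht0 ht1 (by linarith)
      have h2 : 2 * |g t| ≤ ε * (t ^ α * g t ^ 2) + ε⁻¹ * t ^ (-β) := by
        rw [hl, hsq1, hsq2] at hamgm
        have hmono' : ε⁻¹ * t ^ (-α) ≤ ε⁻¹ * t ^ (-β) :=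
          mul_le_mul_of_nonneg_left hmono hεinv.le
        linarith
      linarith
    -- integrate the pointwise bound
    have habs : |ϑ (1/2) - ϑ x| ≤ ∫ t in x..(1/2), |g t| := by
      rw [hFTC]
      exact intervalIntegral.abs_integral_le_integral_abs hx12
    have hmono1 : ∫ t in x..(1/2), |g t|
        ≤ ∫ t in x..(1/2), (ε/2 * (t ^ α * g t ^ 2) + ε⁻¹/2 * t ^ (-β)) :=
      intervalIntegral.integral_mono_on hx12 hgInt.abs
        ((hfIntI.const_mul _).add (hrpowInt.const_mul _)) hpt
    have hsplit : ∫ t in x..(1/2), (ε/2 * (t ^ α * g t ^ 2) + ε⁻¹/2 * t ^ (-β))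
        = ε/2 * (∫ t in x..(1/2), t ^ α * g t ^ 2) + ε⁻¹/2 * ∫ t in x..(1/2), t ^ (-β) := by
      rw [intervalIntegral.integral_add (hfIntI.const_mul _) (hrpowInt.const_mul _),
        intervalIntegral.integral_const_mul, intervalIntegral.integral_const_mul]
    have hεeq : ε⁻¹ * x ^ (1 - β) = ε := by
      have h1 : ε * ε = x ^ (1 - β) := by
        rw [hεdef, ← Real.rpow_add hx0]
        congr 1
        ring
      rw [← h1]
      exact inv_mul_cancel_left₀ hε0.ne' ε
    have hbound : ∫ t in x..(1/2), |g t| ≤ ε * C := by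
      have hεinv : (0:ℝ) < ε⁻¹ := inv_pos.mpr hε0
      have e1 := mul_le_mul_of_nonneg_left hI1' (by linarith : (0:ℝ) ≤ ε/2)
      have e2 := mul_le_mul_of_nonneg_left hI2 (by linarith : (0:ℝ) ≤ ε⁻¹/2)
      have e3 : ε⁻¹/2 * (x ^ (1 - β) / (β - 1)) = ε * (1 / (2 * (β - 1))) := by
        calc ε⁻¹/2 * (x ^ (1 - β) / (β - 1))
            = (ε⁻¹ * x ^ (1 - β)) * (1 / (2 * (β - 1))) := by ring
          _ = ε * (1 / (2 * (β - 1))) := by rw [hεeq]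
      have := hmono1.trans_eq hsplit
      rw [hCdef]
      calc ∫ t in x..(1/2), |g t|
          ≤ ε/2 * M + ε⁻¹/2 * (x ^ (1 - β) / (β - 1)) := by linarith
        _ = ε * (M / 2) + ε * (1 / (2 * (β - 1))) := by rw [e3]; ring
        _ = ε * (M / 2 + 1 / (2 * (β - 1))) := by ring
    have hϑx : |ϑ x| ≤ A + ε * C := by
      have h1 : |ϑ x| - |ϑ (1/2)| ≤ |ϑ (1/2) - ϑ x| := by
        rw [abs_sub_comm]; exact abs_sub_abs_le_abs_sub _ _
      rw [hAdef]
      linarith [habs.trans hbound]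
    have hsx : (0:ℝ) ≤ Real.sqrt x := Real.sqrt_nonneg _
    have hsε : Real.sqrt x * ε = x ^ ((2 - β)/2) := by
      rw [Real.sqrt_eq_rpow, hεdef, ← Real.rpow_add hx0]
      congr 1; ring
    calc Real.sqrt x * |ϑ x| ≤ Real.sqrt x * (A + ε * C) :=
          mul_le_mul_of_nonneg_left hϑx hsx
      _ = A * Real.sqrt x + C * (Real.sqrt x * ε) := by ring
      _ = A * Real.sqrt x + C * x ^ ((2 - β)/2) := by rw [hsε]
  -- the upper bound tends to 0
  have hb1 : Tendsto (fun x : ℝ => A * Real.sqrt x + C * x ^ ((2 - β)/2))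
      (nhdsWithin 0 (Ioi 0)) (nhds 0) := by
    have h1 : Tendsto (fun x : ℝ => Real.sqrt x) (nhds 0) (nhds 0) := by
      simpa using Real.continuous_sqrt.tendsto 0
    have h2 : Tendsto (fun x : ℝ => x ^ ((2 - β)/2)) (nhds 0) (nhds 0) := by
      have hne : ((2:ℝ) - β)/2 ≠ 0 := by
        have : (0:ℝ) < (2 - β)/2 := by linarith
        exact this.ne'
      have hc := Real.continuousAt_rpow_const 0 ((2 - β)/2) (Or.inr (by linarith))
      simpa [Real.zero_rpow hne] using hc.tendsto
    have hsum := (h1.const_mul A).add (h2.const_mul C)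
    simpa using hsum.mono_left nhdsWithin_le_nhds
  have hsq : Tendsto (fun x : ℝ => Real.sqrt x * |ϑ x|) (nhdsWithin 0 (Ioi 0)) (nhds 0) := by
    refine squeeze_zero' ?_ ?_ hb1
    · exact Eventually.of_forall fun x => mul_nonneg (Real.sqrt_nonneg _) (abs_nonneg _)
    · filter_upwards [Ioc_mem_nhdsGT (by norm_num : (0:ℝ) < 1/2)] with x hx
      exact key x hx
  have hmul : Tendsto (fun x : ℝ => (Real.sqrt x * |ϑ x|) * (Real.sqrt x * |ϑ x|))
      (nhdsWithin 0 (Ioi 0)) (nhds 0) := by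
    simpa using hsq.mul hsq
  refine Tendsto.congr' ?_ hmul
  filter_upwards [self_mem_nhdsWithin] with x (hx : x ∈ Ioi (0:ℝ))
  have hx0 : (0:ℝ) ≤ x := le_of_lt hx
  rw [mul_mul_mul_comm, Real.mul_self_sqrt hx0, abs_mul_abs_self, ← pow_two]
end
end

section
/- (Lemma 2.3) For every τ > 0 and every admissible v, ∫_Z ( −∂_x(x^α ∂_x v) − τ² x^{2−α} v ) · ( 2τ x ∂_x v + τ v ) ds dx = τ(2−α) ∫_Z x^α |∂_x v|² + τ³(2−α) ∫_Z x^{2−α} |v|² + B₀(v), where B₀(v) = −τ ∫_{−S0}^{S0} [ x^{α+1} |∂_x v|² ]_{x=0}^{x=1} ds − τ ∫_{−S0}^{S0} [ x^α v ∂_x v ]_{x=0}^{x=1} ds − τ³ ∫_{−S0}^{S0} [ x^{3−α} |v|² ]_{x=0}^{x=1} ds. -/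
/-!
Integration by parts in `x` on each slice `s = const`. Writing `q = x^α v'` (so that
`q' = (x^α v')'` exists although `v'` need not be differentiable), the integrand equals
`τ(2-α) x^α v'² + τ³(2-α) x^{2-α} v² - F'`, where
`F = τ x^{1-α} q² + τ q v + τ³ x^{3-α} v²` is the flux whose boundary values make up `B₀(v)`.
The fundamental theorem of calculus on `(0,1)` and Fubini on `Z` finish the proof.
-/

open MeasureTheory Set Filter
open scoped ENNReal

noncomputable section

/-- The rectangle `Z = (-S0,S0) × (0,1)`, with variables `(s,x)`. -/
def Zset (S0 : ℝ) : Set (ℝ × ℝ) := Ioo (-S0) S0 ×ˢ Ioo (0:ℝ) 1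

open Topology

theorem integral_Ioo_eq_sub_of_hasDerivAt_of_tendsto {E : Type*} [NormedAddCommGroup E]
    [NormedSpace ℝ E] [CompleteSpace E] {f f' : ℝ → E} {a b : ℝ} {fa fb : E}
    (hab : a < b) (hderiv : ∀ x ∈ Ioo a b, HasDerivAt f (f' x) x)
    (hint : IntegrableOn f' (Ioo a b)) (hfa : Tendsto f (𝓝[>] a) (𝓝 fa))
    (hfb : Tendsto f (𝓝[<] b) (𝓝 fb)) :
    ∫ x in Ioo a b, f' x = fb - fa := by
  rw [← integral_Ioc_eq_integral_Ioo, ← intervalIntegral.integral_of_le hab.le]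
  exact intervalIntegral.integral_eq_sub_of_hasDerivAt_of_tendsto hab hderiv
    ((intervalIntegrable_iff_integrableOn_Ioo_of_le hab.le).mpr hint) hfa hfb

theorem MeasureTheory.IntegrableOn.integrable_restrict_prod {X Y E : Type*}
    [MeasurableSpace X] [MeasurableSpace Y] [NormedAddCommGroup E]
    {μ : Measure X} {ν : Measure Y} [SFinite μ] [SFinite ν]
    {f : X × Y → E} {s : Set X} {t : Set Y} (hf : IntegrableOn f (s ×ˢ t) (μ.prod ν)) :
    Integrable f ((μ.restrict s).prod (ν.restrict t)) := by
  rwa [Measure.prod_restrict]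

section Flux

variable (α τ : ℝ) (V Vx : ℝ → ℝ)

def carlemanFlux (y : ℝ) : ℝ :=
  τ * (y ^ (1 - α) * (y ^ α * Vx y) ^ 2) + τ * (y ^ α * Vx y * V y)
    + τ ^ 3 * (y ^ (3 - α) * V y ^ 2)

variable {α τ V Vx}

theorem carlemanFlux_eq {y : ℝ} (hy : 0 < y) :
    carlemanFlux α τ V Vx y = τ * (y ^ (α + 1) * Vx y ^ 2) + τ * (y ^ α * V y * Vx y)
      + τ ^ 3 * (y ^ (3 - α) * V y ^ 2) := by
  have hpow : y ^ (1 - α) * (y ^ α * Vx y) ^ 2 = y ^ (α + 1) * Vx y ^ 2 := by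
    rw [mul_pow, ← mul_assoc, ← Real.rpow_natCast, ← Real.rpow_mul hy.le, ← Real.rpow_add hy,
      show 1 - α + α * ((2 : ℕ) : ℝ) = α + 1 by push_cast; ring]
  rw [carlemanFlux, hpow]
  ring

theorem hasDerivAt_carlemanFlux {P : ℝ → ℝ} {x : ℝ} (hx : 0 < x)
    (hV : HasDerivAt V (Vx x) x) (hP : HasDerivAt (fun y => y ^ α * Vx y) (P x) x) :
    HasDerivAt (carlemanFlux α τ V Vx)
      (τ * (2 - α) * (x ^ α * Vx x ^ 2) + τ ^ 3 * (2 - α) * (x ^ (2 - α) * V x ^ 2)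
        - (-P x - τ ^ 2 * x ^ (2 - α) * V x) * (2 * τ * x * Vx x + τ * V x)) x := by
  have h1 : HasDerivAt (fun y : ℝ => y ^ (1 - α)) ((1 - α) * x ^ (1 - α - 1)) x :=
    Real.hasDerivAt_rpow_const (Or.inl hx.ne')
  have h3 : HasDerivAt (fun y : ℝ => y ^ (3 - α)) ((3 - α) * x ^ (3 - α - 1)) x :=
    Real.hasDerivAt_rpow_const (Or.inl hx.ne')
  refine ((((h1.mul (hP.pow 2)).const_mul τ).add ((hP.mul hV).const_mul τ)).add
    ((h3.mul (hV.pow 2)).const_mul (τ ^ 3))).congr_deriv ?_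
  have hxα : x ^ α ≠ 0 := (Real.rpow_pos_of_pos hx α).ne'
  have e1 : x ^ (1 - α - 1) = (x ^ α)⁻¹ := by
    rw [show 1 - α - 1 = -α by ring, Real.rpow_neg hx.le]
  have e2 : x ^ (1 - α) = x * (x ^ α)⁻¹ := by
    rw [sub_eq_add_neg, Real.rpow_add hx, Real.rpow_one, Real.rpow_neg hx.le]
  have e3 : x ^ (3 - α - 1) = x ^ (2 - α) := by rw [show 3 - α - 1 = 2 - α by ring]
  have e4 : x ^ (3 - α) = x ^ (2 - α) * x := by
    rw [show 3 - α = 2 - α + 1 by ring, Real.rpow_add hx, Real.rpow_one]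
  simp only [e1, e2, e3, e4, Pi.pow_apply]
  field_simp
  ring

theorem tendsto_carlemanFlux {l : Filter ℝ} {a b c : ℝ} (hl : ∀ᶠ y in l, 0 < y)
    (ha : Tendsto (fun y => y ^ (α + 1) * Vx y ^ 2) l (𝓝 a))
    (hb : Tendsto (fun y => y ^ α * V y * Vx y) l (𝓝 b))
    (hc : Tendsto (fun y => y ^ (3 - α) * V y ^ 2) l (𝓝 c)) :
    Tendsto (carlemanFlux α τ V Vx) l (𝓝 (τ * a + τ * b + τ ^ 3 * c)) := by
  refine (((ha.const_mul τ).add (hb.const_mul τ)).add (hc.const_mul (τ ^ 3))).congr' ?_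
  filter_upwards [hl] with y hy
  exact (carlemanFlux_eq hy).symm

end Flux

theorem setIntegral_Zset {S0 : ℝ} {f : ℝ × ℝ → ℝ} (hf : IntegrableOn f (Zset S0)) :
    ∫ p in Zset S0, f p = ∫ s in Ioo (-S0) S0, ∫ x in Ioo (0:ℝ) 1, f (s, x) :=
  setIntegral_prod f hf

theorem integral_carleman_slice {α τ : ℝ} {V Vx P : ℝ → ℝ}
    (hV : ∀ x ∈ Ioo (0:ℝ) 1, HasDerivAt V (Vx x) x)
    (hP : ∀ x ∈ Ioo (0:ℝ) 1, HasDerivAt (fun y => y ^ α * Vx y) (P x) x)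
    {a0 a1 b0 b1 c0 c1 : ℝ}
    (ha0 : Tendsto (fun x => x ^ (α + 1) * Vx x ^ 2) (𝓝[>] 0) (𝓝 a0))
    (ha1 : Tendsto (fun x => x ^ (α + 1) * Vx x ^ 2) (𝓝[<] 1) (𝓝 a1))
    (hb0 : Tendsto (fun x => x ^ α * V x * Vx x) (𝓝[>] 0) (𝓝 b0))
    (hb1 : Tendsto (fun x => x ^ α * V x * Vx x) (𝓝[<] 1) (𝓝 b1))
    (hc0 : Tendsto (fun x => x ^ (3 - α) * V x ^ 2) (𝓝[>] 0) (𝓝 c0))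
    (hc1 : Tendsto (fun x => x ^ (3 - α) * V x ^ 2) (𝓝[<] 1) (𝓝 c1))
    (hL : IntegrableOn (fun x => (-P x - τ ^ 2 * x ^ (2 - α) * V x) *
        (2 * τ * x * Vx x + τ * V x)) (Ioo 0 1))
    (h1 : IntegrableOn (fun x => x ^ α * Vx x ^ 2) (Ioo 0 1))
    (h2 : IntegrableOn (fun x => x ^ (2 - α) * V x ^ 2) (Ioo 0 1)) :
    ∫ x in Ioo (0:ℝ) 1, (-P x - τ ^ 2 * x ^ (2 - α) * V x) * (2 * τ * x * Vx x + τ * V x)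
      = τ * (2 - α) * (∫ x in Ioo (0:ℝ) 1, x ^ α * Vx x ^ 2)
        + τ ^ 3 * (2 - α) * (∫ x in Ioo (0:ℝ) 1, x ^ (2 - α) * V x ^ 2)
        - (τ * (a1 - a0) + τ * (b1 - b0) + τ ^ 3 * (c1 - c0)) := by
  have h1' := h1.const_mul (τ * (2 - α))
  have h2' := h2.const_mul (τ ^ 3 * (2 - α))
  have h12 : IntegrableOn (fun x => τ * (2 - α) * (x ^ α * Vx x ^ 2)
      + τ ^ 3 * (2 - α) * (x ^ (2 - α) * V x ^ 2)) (Ioo 0 1) := h1'.add h2'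
  have hFTC := integral_Ioo_eq_sub_of_hasDerivAt_of_tendsto zero_lt_one
    (fun x hx => hasDerivAt_carlemanFlux (τ := τ) hx.1 (hV x hx) (hP x hx))
    (h12.sub hL)
    (tendsto_carlemanFlux self_mem_nhdsWithin ha0 hb0 hc0)
    (tendsto_carlemanFlux (mem_of_superset (Ioo_mem_nhdsLT zero_lt_one) fun _ hy => hy.1)
      ha1 hb1 hc1)
  rw [integral_sub h12 hL, integral_add h1' h2', integral_const_mul,
    integral_const_mul] at hFTC
  linarith

theorem lemma_2_3_general
    (α S0 τ : ℝ)
    (v vx Pv : ℝ → ℝ → ℝ)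
    -- x-derivatives of v (s-sections belong to D(P))
    (hvx : ∀ s ∈ Icc (-S0) S0, ∀ x ∈ Ioo (0:ℝ) 1, HasDerivAt (fun y => v s y) (vx s x) x)
    (hPv : ∀ s ∈ Icc (-S0) S0, ∀ x ∈ Ioo (0:ℝ) 1,
      HasDerivAt (fun y => y ^ α * vx s y) (Pv s x) x)
    -- the boundary limits at x = 0 and x = 1 of the bracket terms
    (A0 A1 Bv0 Bv1 C0 C1 : ℝ → ℝ)
    (hA0 : ∀ s ∈ Ioo (-S0) S0,
      Tendsto (fun x => x ^ (α + 1) * (vx s x) ^ 2) (nhdsWithin 0 (Ioi 0)) (nhds (A0 s)))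
    (hA1 : ∀ s ∈ Ioo (-S0) S0,
      Tendsto (fun x => x ^ (α + 1) * (vx s x) ^ 2) (nhdsWithin 1 (Iio 1)) (nhds (A1 s)))
    (hB0 : ∀ s ∈ Ioo (-S0) S0,
      Tendsto (fun x => x ^ α * v s x * vx s x) (nhdsWithin 0 (Ioi 0)) (nhds (Bv0 s)))
    (hB1 : ∀ s ∈ Ioo (-S0) S0,
      Tendsto (fun x => x ^ α * v s x * vx s x) (nhdsWithin 1 (Iio 1)) (nhds (Bv1 s)))
    (hC0 : ∀ s ∈ Ioo (-S0) S0,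
      Tendsto (fun x => x ^ (3 - α) * (v s x) ^ 2) (nhdsWithin 0 (Ioi 0)) (nhds (C0 s)))
    (hC1 : ∀ s ∈ Ioo (-S0) S0,
      Tendsto (fun x => x ^ (3 - α) * (v s x) ^ 2) (nhdsWithin 1 (Iio 1)) (nhds (C1 s)))
    -- all the occurring integrals are finite
    (hI : IntegrableOn (fun p : ℝ × ℝ =>
      (-(Pv p.1 p.2) - τ ^ 2 * p.2 ^ (2 - α) * v p.1 p.2) *
        (2 * τ * p.2 * vx p.1 p.2 + τ * v p.1 p.2)) (Zset S0))
    (hI1 : IntegrableOn (fun p : ℝ × ℝ => p.2 ^ α * (vx p.1 p.2) ^ 2) (Zset S0))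
    (hI2 : IntegrableOn (fun p : ℝ × ℝ => p.2 ^ (2 - α) * (v p.1 p.2) ^ 2) (Zset S0))
    (hIA : IntegrableOn (fun s => A1 s - A0 s) (Ioo (-S0) S0))
    (hIB : IntegrableOn (fun s => Bv1 s - Bv0 s) (Ioo (-S0) S0))
    (hIC : IntegrableOn (fun s => C1 s - C0 s) (Ioo (-S0) S0)) :
    (∫ p in Zset S0,
        (-(Pv p.1 p.2) - τ ^ 2 * p.2 ^ (2 - α) * v p.1 p.2) *
          (2 * τ * p.2 * vx p.1 p.2 + τ * v p.1 p.2))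
      = τ * (2 - α) * (∫ p in Zset S0, p.2 ^ α * (vx p.1 p.2) ^ 2)
        + τ ^ 3 * (2 - α) * (∫ p in Zset S0, p.2 ^ (2 - α) * (v p.1 p.2) ^ 2)
        + (-(τ * ∫ s in Ioo (-S0) S0, (A1 s - A0 s))
           - τ * (∫ s in Ioo (-S0) S0, (Bv1 s - Bv0 s))
           - τ ^ 3 * ∫ s in Ioo (-S0) S0, (C1 s - C0 s)) := by
  have hJ1 := hI1.integrable_restrict_prod.integral_prod_left
  have hJ2 := hI2.integrable_restrict_prod.integral_prod_left
  have hslice : ∀ᵐ s ∂(volume.restrict (Ioo (-S0) S0)),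
      ∫ x in Ioo (0:ℝ) 1, (-Pv s x - τ ^ 2 * x ^ (2 - α) * v s x) *
          (2 * τ * x * vx s x + τ * v s x)
        = τ * (2 - α) * (∫ x in Ioo (0:ℝ) 1, x ^ α * vx s x ^ 2)
          + τ ^ 3 * (2 - α) * (∫ x in Ioo (0:ℝ) 1, x ^ (2 - α) * v s x ^ 2)
          - (τ * (A1 s - A0 s) + τ * (Bv1 s - Bv0 s) + τ ^ 3 * (C1 s - C0 s)) := by
    filter_upwards [hI.integrable_restrict_prod.prod_right_ae, hI1.integrable_restrict_prod.prod_right_ae,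
      hI2.integrable_restrict_prod.prod_right_ae, ae_restrict_mem measurableSet_Ioo]
      with s hLs h1s h2s hs
    exact integral_carleman_slice (hvx s (Ioo_subset_Icc_self hs))
      (hPv s (Ioo_subset_Icc_self hs)) (hA0 s hs) (hA1 s hs) (hB0 s hs) (hB1 s hs)
      (hC0 s hs) (hC1 s hs) hLs h1s h2s
  rw [IntegrableOn] at hIA hIB hIC
  rw [setIntegral_Zset hI, setIntegral_Zset hI1, setIntegral_Zset hI2,
    integral_congr_ae hslice, integral_sub, integral_add, integral_add, integral_add,
    integral_const_mul, integral_const_mul, integral_const_mul, integral_const_mul,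
    integral_const_mul]
  · ring
  all_goals fun_prop

/-- Lemma 2.3. -/
theorem lemma_2_3
    (α S0 τ : ℝ) (hα : α ∈ Ioo (0:ℝ) 2) (hS0 : 0 < S0) (hτ : 0 < τ)
    (v vx Pv : ℝ → ℝ → ℝ)
    -- x-derivatives of v (s-sections belong to D(P))
    (hvx : ∀ s ∈ Icc (-S0) S0, ∀ x ∈ Ioo (0:ℝ) 1, HasDerivAt (fun y => v s y) (vx s x) x)
    (hPv : ∀ s ∈ Icc (-S0) S0, ∀ x ∈ Ioo (0:ℝ) 1,
      HasDerivAt (fun y => y ^ α * vx s y) (Pv s x) x)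
    -- boundary conditions contained in H¹_α(0,1) and in D(P)
    (hbc1 : ∀ s ∈ Icc (-S0) S0, Tendsto (fun x => v s x) (nhdsWithin 1 (Iio 1)) (nhds 0))
    (hbc0w : ∀ s ∈ Icc (-S0) S0, α < 1 →
      Tendsto (fun x => v s x) (nhdsWithin 0 (Ioi 0)) (nhds 0))
    (hbc0s : ∀ s ∈ Icc (-S0) S0, 1 ≤ α →
      Tendsto (fun x => x ^ α * vx s x) (nhdsWithin 0 (Ioi 0)) (nhds 0))
    -- integrability conditions contained in H¹_α(0,1) and in D(P)
    (hL2 : ∀ s ∈ Icc (-S0) S0, ∫⁻ x in Ioo (0:ℝ) 1, ENNReal.ofReal ((v s x) ^ 2) < ⊤)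
    (hL2x : ∀ s ∈ Icc (-S0) S0, ∫⁻ x in Ioo (0:ℝ) 1, ENNReal.ofReal (x ^ α * (vx s x) ^ 2) < ⊤)
    (hL2P : ∀ s ∈ Icc (-S0) S0, ∫⁻ x in Ioo (0:ℝ) 1, ENNReal.ofReal ((Pv s x) ^ 2) < ⊤)
    -- the boundary limits at x = 0 and x = 1 of the bracket terms
    (A0 A1 Bv0 Bv1 C0 C1 : ℝ → ℝ)
    (hA0 : ∀ s ∈ Ioo (-S0) S0,
      Tendsto (fun x => x ^ (α + 1) * (vx s x) ^ 2) (nhdsWithin 0 (Ioi 0)) (nhds (A0 s)))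
    (hA1 : ∀ s ∈ Ioo (-S0) S0,
      Tendsto (fun x => x ^ (α + 1) * (vx s x) ^ 2) (nhdsWithin 1 (Iio 1)) (nhds (A1 s)))
    (hB0 : ∀ s ∈ Ioo (-S0) S0,
      Tendsto (fun x => x ^ α * v s x * vx s x) (nhdsWithin 0 (Ioi 0)) (nhds (Bv0 s)))
    (hB1 : ∀ s ∈ Ioo (-S0) S0,
      Tendsto (fun x => x ^ α * v s x * vx s x) (nhdsWithin 1 (Iio 1)) (nhds (Bv1 s)))
    (hC0 : ∀ s ∈ Ioo (-S0) S0,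
      Tendsto (fun x => x ^ (3 - α) * (v s x) ^ 2) (nhdsWithin 0 (Ioi 0)) (nhds (C0 s)))
    (hC1 : ∀ s ∈ Ioo (-S0) S0,
      Tendsto (fun x => x ^ (3 - α) * (v s x) ^ 2) (nhdsWithin 1 (Iio 1)) (nhds (C1 s)))
    -- all the occurring integrals are finite
    (hI : IntegrableOn (fun p : ℝ × ℝ =>
      (-(Pv p.1 p.2) - τ ^ 2 * p.2 ^ (2 - α) * v p.1 p.2) *
        (2 * τ * p.2 * vx p.1 p.2 + τ * v p.1 p.2)) (Zset S0))
    (hI1 : IntegrableOn (fun p : ℝ × ℝ => p.2 ^ α * (vx p.1 p.2) ^ 2) (Zset S0))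
    (hI2 : IntegrableOn (fun p : ℝ × ℝ => p.2 ^ (2 - α) * (v p.1 p.2) ^ 2) (Zset S0))
    (hIA : IntegrableOn (fun s => A1 s - A0 s) (Ioo (-S0) S0))
    (hIB : IntegrableOn (fun s => Bv1 s - Bv0 s) (Ioo (-S0) S0))
    (hIC : IntegrableOn (fun s => C1 s - C0 s) (Ioo (-S0) S0)) :
    (∫ p in Zset S0,
        (-(Pv p.1 p.2) - τ ^ 2 * p.2 ^ (2 - α) * v p.1 p.2) *
          (2 * τ * p.2 * vx p.1 p.2 + τ * v p.1 p.2))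
      = τ * (2 - α) * (∫ p in Zset S0, p.2 ^ α * (vx p.1 p.2) ^ 2)
        + τ ^ 3 * (2 - α) * (∫ p in Zset S0, p.2 ^ (2 - α) * (v p.1 p.2) ^ 2)
        + (-(τ * ∫ s in Ioo (-S0) S0, (A1 s - A0 s))
           - τ * (∫ s in Ioo (-S0) S0, (Bv1 s - Bv0 s))
           - τ ^ 3 * ∫ s in Ioo (-S0) S0, (C1 s - C0 s)) :=
  lemma_2_3_general α S0 τ v vx Pv hvx hPv A0 A1 Bv0 Bv1 C0 C1 hA0 hA1 hB0 hB1 hC0 hC1 hI hI1 hI2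
    hIA hIB hIC
end
end

section
/- (Theorem 3.1, (i) ⇒ (ii)) Assume (i): there exists C1 > 0 such that for every Λ > 0 and every real sequence (a_j), Σ_{j : λ_j ≤ Λ} |a_j|² ≤ e^{C1(1+Λ^σ)} ∫_ω | Σ_{j : λ_j ≤ Λ} a_j Φ_j |². Then (ii) holds: there exists C2 > 0 such that for all θ ∈ (0,1), all t > 0 and all u0 ∈ L²(Ω), ‖S(t)u0‖ ≤ e^{C2(1 + (1/(θ t))^{σ/(1−σ)})} ‖u0‖^θ ‖S(t)u0‖_ω^{1−θ}. -/
open MeasureTheory Set Filter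
open scoped RealInnerProductSpace

noncomputable section

/-- The heat semigroup `S(t)u₀ = Σ_j e^{-λ_j t} ⟨u₀, Φ_j⟩ Φ_j` on `L²(Ω)`,
given a Hilbert basis `B` of eigenfunctions and eigenvalues `lam`. -/
noncomputable def heatSG {d : ℕ} {Ω : Set (EuclideanSpace ℝ (Fin d))}
    (B : HilbertBasis ℕ ℝ (Lp ℝ 2 (volume.restrict Ω))) (lam : ℕ → ℝ)
    (t : ℝ) (u : Lp ℝ 2 (volume.restrict Ω)) : Lp ℝ 2 (volume.restrict Ω) :=
  ∑' j, (Real.exp (-(lam j) * t) * ⟪u, B j⟫) • B j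

/-- Multiplication by the indicator function `1_ω` on `L²(Ω)`. -/
noncomputable def indLp {d : ℕ} {Ω : Set (EuclideanSpace ℝ (Fin d))}
    (ω : Set (EuclideanSpace ℝ (Fin d))) (hω : MeasurableSet ω)
    (f : Lp ℝ 2 (volume.restrict Ω)) : Lp ℝ 2 (volume.restrict Ω) :=
  MemLp.toLp (ω.indicator ⇑f) ((Lp.memLp f).indicator hω)


/-!
Cut `S(t)u₀` at a frequency `Λ`. The low-frequency part is observed on `ω` through the spectral
inequality, while the high-frequency part has norm at most `e^{-Λt}‖u₀‖`; hence
`‖S(t)u₀‖ ≤ 2 e^{C₁(1+Λ^σ)} (‖S(t)u₀‖_ω + e^{-Λt}‖u₀‖)` for every `Λ > 0`. Young's inequality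
`C₁Λ^σ ≤ θtΛ + C₁^{1/(1-σ)} (θt)^{-σ/(1-σ)}` absorbs the spectral cost into `e^{θtΛ}`, and the
choice `e^{Λt} = ‖u₀‖ / ‖S(t)u₀‖_ω` yields the interpolation inequality.
-/

open Real Topology

theorem Orthonormal.norm_sum_smul_sq {ι E : Type*} [NormedAddCommGroup E] [InnerProductSpace ℝ E]
    {v : ι → E} (hv : Orthonormal ℝ v) (s : Finset ι) (a : ι → ℝ) :
    ‖∑ i ∈ s, a i • v i‖ ^ 2 = ∑ i ∈ s, a i ^ 2 := by
  rw [← real_inner_self_eq_norm_sq, hv.inner_sum]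
  simp only [conj_trivial, sq]

namespace HilbertBasis

variable {ι E : Type*} [NormedAddCommGroup E] [InnerProductSpace ℝ E] (B : HilbertBasis ι ℝ E)

theorem norm_le_of_forall_abs_repr_le {u v : E} (h : ∀ i, |B.repr v i| ≤ |B.repr u i|) :
    ‖v‖ ≤ ‖u‖ := by
  rw [← B.repr.norm_map v, ← B.repr.norm_map u]
  exact lp.norm_mono two_ne_zero h

theorem repr_tsum_mul_repr_smul {c : ι → ℝ} (hc : ∀ i, |c i| ≤ 1) (u : E) (j : ι) :
    B.repr (∑' i, (c i * B.repr u i) • B i) j = c j * B.repr u j := by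
  have hmem : Memℓp (fun i => c i * B.repr u i) 2 :=
    (lp.memℓp (B.repr u)).mono' fun i => by
      rw [norm_mul]
      exact mul_le_of_le_one_left (norm_nonneg _) (hc i)
  rw [(B.hasSum_repr_symm ⟨_, hmem⟩).tsum_eq, LinearIsometryEquiv.apply_symm_apply]

theorem repr_sum_smul [DecidableEq ι] (s : Finset ι) (a : ι → ℝ) (j : ι) :
    B.repr (∑ i ∈ s, a i • B i) j = if j ∈ s then a j else 0 := by
  rw [B.repr_apply_apply, inner_sum]
  simp only [real_inner_smul_right,
    orthonormal_iff_ite.mp B.orthonormal, mul_ite, mul_one, mul_zero, Finset.sum_ite_eq]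

theorem norm_sub_sum_repr_smul_le {s : Finset ι} {u v : E}
    (h : ∀ i ∉ s, |B.repr v i| ≤ |B.repr u i|) :
    ‖v - ∑ i ∈ s, B.repr v i • B i‖ ≤ ‖u‖ := by
  classical
  refine B.norm_le_of_forall_abs_repr_le fun i => ?_
  rw [map_sub, lp.coeFn_sub, Pi.sub_apply, B.repr_sum_smul]
  split_ifs with hi
  · simp
  · simpa using h i hi

end HilbertBasis

section HeatSemigroup

variable {d : ℕ} {Ω : Set (EuclideanSpace ℝ (Fin d))}
  (B : HilbertBasis ℕ ℝ (Lp ℝ 2 (volume.restrict Ω))) {lam : ℕ → ℝ} {t : ℝ}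

theorem repr_heatSG (hlam : ∀ j, 0 ≤ lam j) (ht : 0 ≤ t) (u : Lp ℝ 2 (volume.restrict Ω))
    (j : ℕ) : B.repr (heatSG B lam t u) j = exp (-lam j * t) * B.repr u j := by
  have hc : ∀ j, |exp (-lam j * t)| ≤ 1 := fun j => by
    rw [abs_exp, exp_le_one_iff]
    nlinarith [hlam j]
  have hsum : heatSG B lam t u = ∑' i, (exp (-lam i * t) * B.repr u i) • B i := by
    simp only [heatSG, B.repr_apply_apply, real_inner_comm]
  rw [hsum]
  exact B.repr_tsum_mul_repr_smul hc u j

theorem norm_heatSG_le (hlam : ∀ j, 0 ≤ lam j) (ht : 0 ≤ t) (u : Lp ℝ 2 (volume.restrict Ω)) :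
    ‖heatSG B lam t u‖ ≤ ‖u‖ :=
  B.norm_le_of_forall_abs_repr_le fun j => by
    rw [repr_heatSG B hlam ht, abs_mul, abs_exp]
    exact mul_le_of_le_one_left (abs_nonneg _) (exp_le_one_iff.mpr (by nlinarith [hlam j]))

theorem norm_heatSG_sub_sum_le (hlam : ∀ j, 0 ≤ lam j) (ht : 0 ≤ t)
    (u : Lp ℝ 2 (volume.restrict Ω)) {Λ : ℝ} {s : Finset ℕ} (hs : ∀ j ∉ s, Λ < lam j) :
    ‖heatSG B lam t u - ∑ j ∈ s, B.repr (heatSG B lam t u) j • B j‖ ≤ exp (-Λ * t) * ‖u‖ := by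
  have h := B.norm_sub_sum_repr_smul_le (u := exp (-Λ * t) • u) (v := heatSG B lam t u) fun j hj => by
    rw [repr_heatSG B hlam ht, map_smul, lp.coeFn_smul, Pi.smul_apply, smul_eq_mul,
      abs_mul, abs_mul, abs_exp, abs_exp]
    gcongr
    nlinarith [hs j hj]
  rwa [norm_smul, norm_of_nonneg (exp_pos _).le] at h

end HeatSemigroup

section Indicator

variable {d : ℕ} {Ω ω : Set (EuclideanSpace ℝ (Fin d))} (hω : MeasurableSet ω)

theorem norm_indLp_le (f : Lp ℝ 2 (volume.restrict Ω)) : ‖indLp ω hω f‖ ≤ ‖f‖ := by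
  rw [indLp, Lp.norm_toLp, Lp.norm_def]
  exact ENNReal.toReal_mono (Lp.eLpNorm_ne_top f) (eLpNorm_indicator_le _)

theorem indLp_sub (f g : Lp ℝ 2 (volume.restrict Ω)) :
    indLp ω hω (f - g) = indLp ω hω f - indLp ω hω g := by
  rw [indLp, indLp, indLp, ← MemLp.toLp_sub]
  refine MemLp.toLp_congr _ _ ?_
  filter_upwards [Lp.coeFn_sub f g] with x hx
  by_cases h : x ∈ ω
  · simp only [indicator_of_mem h, Pi.sub_apply, hx]
  · simp [indicator_of_notMem h]

theorem norm_le_of_norm_sq_le_mul_norm_indLp_sq {v w : Lp ℝ 2 (volume.restrict Ω)} {K : ℝ}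
    (hK : 1 ≤ K) (hw : ‖w‖ ^ 2 ≤ K * ‖indLp ω hω w‖ ^ 2) :
    ‖v‖ ≤ 2 * K * (‖indLp ω hω v‖ + ‖v - w‖) := by
  have hw' : ‖w‖ ≤ K * ‖indLp ω hω w‖ := by
    refine le_of_pow_le_pow_left₀ two_ne_zero (by positivity) (hw.trans ?_)
    rw [mul_pow]
    gcongr
    nlinarith
  have hindw : ‖indLp ω hω w‖ ≤ ‖indLp ω hω v‖ + ‖v - w‖ := by
    have hsplit : indLp ω hω w = indLp ω hω v - indLp ω hω (v - w) := by
      rw [← indLp_sub, sub_sub_cancel]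
    rw [hsplit]
    exact (norm_sub_le _ _).trans (by gcongr; exact norm_indLp_le hω _)
  have := norm_le_norm_add_norm_sub' v w
  nlinarith [norm_nonneg (indLp ω hω v), norm_nonneg (v - w), norm_nonneg (indLp ω hω w)]

end Indicator

theorem mul_rpow_le_mul_add_rpow {C σ s Λ : ℝ} (hC : 0 ≤ C) (hσ : σ ∈ Ioo (0:ℝ) 1)
    (hs : 0 < s) (hΛ : 0 ≤ Λ) :
    C * Λ ^ σ ≤ s * Λ + C ^ (1 / (1 - σ)) * (1 / s) ^ (σ / (1 - σ)) := by
  obtain ⟨hσ0, hσ1⟩ := hσ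
  have h1σ : 0 < 1 - σ := by linarith
  have hpq : HolderConjugate (1 / σ) (1 / (1 - σ)) := by
    rw [holderConjugate_iff]
    exact ⟨by rw [lt_div_iff₀ hσ0]; linarith, by rw [one_div, one_div, inv_inv, inv_inv]; ring⟩
  -- Young's inequality for `(sΛ)^σ` and `C s^{-σ}` with exponents `1/σ` and `1/(1-σ)`
  have hy := young_inequality_of_nonneg (rpow_nonneg (mul_nonneg hs.le hΛ) σ)
    (div_nonneg hC (rpow_nonneg hs.le σ)) hpq
  have hab : (s * Λ) ^ σ * (C / s ^ σ) = C * Λ ^ σ := by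
    rw [mul_rpow hs.le hΛ]
    field_simp
  have ha : ((s * Λ) ^ σ) ^ (1 / σ) = s * Λ := by
    rw [← rpow_mul (by positivity), mul_one_div_cancel hσ0.ne', rpow_one]
  have hb : (C / s ^ σ) ^ (1 / (1 - σ)) = C ^ (1 / (1 - σ)) * (1 / s) ^ (σ / (1 - σ)) := by
    rw [div_rpow hC (by positivity), ← rpow_mul hs.le, one_div s, inv_rpow hs.le,
      show σ * (1 / (1 - σ)) = σ / (1 - σ) by ring, div_eq_mul_inv]
  rw [hab, ha, hb] at hy
  have h1 : s * Λ / (1 / σ) ≤ s * Λ :=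
    div_le_self (by positivity) (by rw [le_div_iff₀ hσ0]; linarith)
  have h2 : C ^ (1 / (1 - σ)) * (1 / s) ^ (σ / (1 - σ)) / (1 / (1 - σ)) ≤
      C ^ (1 / (1 - σ)) * (1 / s) ^ (σ / (1 - σ)) :=
    div_le_self (by positivity) (by rw [le_div_iff₀ h1σ]; linarith)
  linarith

theorem le_mul_rpow_mul_rpow_of_forall_le {A y z M θ : ℝ} (hA : 1 ≤ A) (hθ : θ < 1)
    (hy : 0 ≤ y) (hz : 0 ≤ z) (hyM : y ≤ M)
    (h : ∀ s > 0, y ≤ A * exp (θ * s) * (z + exp (-s) * M)) :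
    y ≤ 2 * A * M ^ θ * z ^ (1 - θ) := by
  have hM : 0 ≤ M := hy.trans hyM
  rcases hz.eq_or_lt with rfl | hz
  · have hlim : Tendsto (fun s => A * M * exp (-(1 - θ) * s)) atTop (𝓝 0) := by
      simpa using ((tendsto_exp_atBot.comp
        (tendsto_id.const_mul_atTop_of_neg (by linarith : -(1 - θ) < 0))).const_mul (A * M))
    have hy0 : y ≤ 0 := ge_of_tendsto hlim <| (eventually_gt_atTop 0).mono fun s hs =>
      (h s hs).trans_eq <| by rw [zero_add, show -(1 - θ) * s = θ * s + -s by ring, exp_add]; ring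
    rw [zero_rpow (by linarith), mul_zero]
    exact hy0
  by_cases hMz : M ≤ z
  · calc y ≤ M := hyM
      _ = M ^ θ * M ^ (1 - θ) := by rw [← rpow_add' hM (by norm_num), add_sub_cancel, rpow_one]
      _ ≤ 1 * M ^ θ * z ^ (1 - θ) := by
        rw [one_mul]
        gcongr
      _ ≤ 2 * A * M ^ θ * z ^ (1 - θ) := by gcongr; linarith
  · push Not at hMz
    -- the choice `s = log (M / z)` balances the two terms: `exp (-s) * M = z`
    have hMz_pos : 0 < M / z := div_pos (hz.trans hMz) hz
    have hs : 0 < log (M / z) := log_pos ((one_lt_div hz).mpr hMz)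
    have hexp_neg : exp (-log (M / z)) * M = z := by
      rw [exp_neg, exp_log hMz_pos, inv_div, div_mul_cancel₀ _ (hz.trans hMz).ne']
    have hexp_θ : exp (θ * log (M / z)) * z = M ^ θ * z ^ (1 - θ) := by
      rw [mul_comm θ, ← rpow_def_of_pos hMz_pos, div_rpow hM hz.le, rpow_sub hz, rpow_one]
      field_simp
    calc y ≤ A * exp (θ * log (M / z)) * (z + exp (-log (M / z)) * M) := h _ hs
      _ = 2 * A * M ^ θ * z ^ (1 - θ) := by
        rw [hexp_neg]
        linear_combination (2 * A) * hexp_θ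

theorem exists_observation_constant {C1 σ : ℝ} (hC1 : 0 ≤ C1) (hσ : σ ∈ Ioo (0:ℝ) 1) :
    ∃ C2 > 0, ∀ θ ∈ Ioo (0:ℝ) 1, ∀ t > 0, ∀ y z M : ℝ, 0 ≤ y → 0 ≤ z → y ≤ M →
      (∀ Λ > 0, y ≤ 2 * exp (C1 * (1 + Λ ^ σ)) * (z + exp (-Λ * t) * M)) →
      y ≤ exp (C2 * (1 + (1 / (θ * t)) ^ (σ / (1 - σ)))) * M ^ θ * z ^ (1 - θ) := by
  have hlog4 : 0 < log 4 := log_pos (by norm_num)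
  refine ⟨log 4 + C1 + C1 ^ (1 / (1 - σ)), by positivity, ?_⟩
  intro θ ⟨hθ0, hθ1⟩ t ht y z M hy hz hyM h
  set T := (1 / (θ * t)) ^ (σ / (1 - σ))
  set D := C1 ^ (1 / (1 - σ)) * T
  have hT : 0 ≤ T := by positivity
  have hM : 0 ≤ M := hy.trans hyM
  have hscaled : ∀ s > 0, y ≤ 2 * exp (C1 + D) * exp (θ * s) * (z + exp (-s) * M) := fun s hs' => by
    have hΛ : 0 < s / t := div_pos hs' ht
    have hyoung := mul_rpow_le_mul_add_rpow hC1 hσ (mul_pos hθ0 ht) hΛ.le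
    rw [show θ * t * (s / t) = θ * s by field_simp] at hyoung
    calc y ≤ 2 * exp (C1 * (1 + (s / t) ^ σ)) * (z + exp (-(s / t) * t) * M) := h _ hΛ
      _ ≤ 2 * exp (C1 + D) * exp (θ * s) * (z + exp (-s) * M) := by
        rw [show -(s / t) * t = -s by field_simp, mul_assoc (2:ℝ) (exp (C1 + D)), ← exp_add]
        gcongr
        linarith
  have hbound := le_mul_rpow_mul_rpow_of_forall_le (one_le_two.trans
    (le_mul_of_one_le_right zero_le_two (one_le_exp (by positivity)))) hθ1 hy hz hyM hscaled
  calc y ≤ 2 * (2 * exp (C1 + D)) * M ^ θ * z ^ (1 - θ) := hbound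
    _ = exp (log 4 + C1 + D) * M ^ θ * z ^ (1 - θ) := by
      rw [exp_add, exp_add, exp_add, exp_log (by norm_num)]
      ring
    _ ≤ exp ((log 4 + C1 + C1 ^ (1 / (1 - σ))) * (1 + T)) * M ^ θ * z ^ (1 - θ) := by
      gcongr
      nlinarith [rpow_nonneg hC1 (1 / (1 - σ))]

theorem spectral_ineq_implies_observation_at_one_time_general
    (d : ℕ) (Ω ω : Set (EuclideanSpace ℝ (Fin d)))
    (hωm : MeasurableSet ω)
    (B : HilbertBasis ℕ ℝ (Lp ℝ 2 (volume.restrict Ω)))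
    (lam : ℕ → ℝ) (hpos : ∀ j, 0 < lam j)
    (hfin : ∀ Λ : ℝ, {j : ℕ | lam j ≤ Λ}.Finite)
    (σ : ℝ) (hσ : σ ∈ Ioo (0:ℝ) 1)
    -- (i) : spectral inequality
    (hi : ∃ C1 > 0, ∀ Λ > 0, ∀ a : ℕ → ℝ,
      ∑ j ∈ (hfin Λ).toFinset, (a j) ^ 2 ≤
        Real.exp (C1 * (1 + Λ ^ σ)) *
          ‖indLp ω hωm (∑ j ∈ (hfin Λ).toFinset, a j • B j)‖ ^ 2) :
    -- (ii)
    ∃ C2 > 0, ∀ θ ∈ Ioo (0:ℝ) 1, ∀ t > 0, ∀ u0 : Lp ℝ 2 (volume.restrict Ω),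
      ‖heatSG B lam t u0‖ ≤
        Real.exp (C2 * (1 + (1 / (θ * t)) ^ (σ / (1 - σ)))) *
          ‖u0‖ ^ θ * ‖indLp ω hωm (heatSG B lam t u0)‖ ^ (1 - θ) := by
  obtain ⟨C1, hC1, hspec⟩ := hi
  obtain ⟨C2, hC2, hobs⟩ := exists_observation_constant hC1.le hσ
  have hlam : ∀ j, 0 ≤ lam j := fun j => (hpos j).le
  refine ⟨C2, hC2, fun θ hθ t ht u0 => hobs θ hθ t ht _ _ _ (norm_nonneg _) (norm_nonneg _)
    (norm_heatSG_le B hlam ht.le u0) fun Λ hΛ => ?_⟩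
  set v := heatSG B lam t u0
  set low := ∑ j ∈ (hfin Λ).toFinset, B.repr v j • B j
  have hlow : ‖low‖ ^ 2 ≤ exp (C1 * (1 + Λ ^ σ)) * ‖indLp ω hωm low‖ ^ 2 := by
    rw [B.orthonormal.norm_sum_smul_sq]
    exact hspec Λ hΛ _
  have hhigh : ‖v - low‖ ≤ exp (-Λ * t) * ‖u0‖ :=
    norm_heatSG_sub_sum_le B hlam ht.le u0 fun j hj => by simpa using hj
  calc ‖v‖ ≤ 2 * exp (C1 * (1 + Λ ^ σ)) * (‖indLp ω hωm v‖ + ‖v - low‖) :=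
        norm_le_of_norm_sq_le_mul_norm_indLp_sq hωm (one_le_exp (by positivity)) hlow
    _ ≤ 2 * exp (C1 * (1 + Λ ^ σ)) * (‖indLp ω hωm v‖ + exp (-Λ * t) * ‖u0‖) := by gcongr

/-- Theorem 3.1, (i) ⇒ (ii). -/
theorem spectral_ineq_implies_observation_at_one_time
    (d : ℕ) (hd : 1 ≤ d) (Ω ω : Set (EuclideanSpace ℝ (Fin d)))
    (hΩo : IsOpen Ω) (hΩb : Bornology.IsBounded Ω) (hΩc : IsConnected Ω)
    (hωo : IsOpen ω) (hωne : ω.Nonempty) (hωΩ : ω ⊆ Ω) (hωm : MeasurableSet ω)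
    (B : HilbertBasis ℕ ℝ (Lp ℝ 2 (volume.restrict Ω)))
    (lam : ℕ → ℝ) (hpos : ∀ j, 0 < lam j) (hmono : Monotone lam)
    (hlim : Tendsto lam atTop atTop)
    (hfin : ∀ Λ : ℝ, {j : ℕ | lam j ≤ Λ}.Finite)
    (σ : ℝ) (hσ : σ ∈ Ioo (0:ℝ) 1)
    -- (i) : spectral inequality
    (hi : ∃ C1 > 0, ∀ Λ > 0, ∀ a : ℕ → ℝ,
      ∑ j ∈ (hfin Λ).toFinset, (a j) ^ 2 ≤
        Real.exp (C1 * (1 + Λ ^ σ)) *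
          ‖indLp ω hωm (∑ j ∈ (hfin Λ).toFinset, a j • B j)‖ ^ 2) :
    -- (ii)
    ∃ C2 > 0, ∀ θ ∈ Ioo (0:ℝ) 1, ∀ t > 0, ∀ u0 : Lp ℝ 2 (volume.restrict Ω),
      ‖heatSG B lam t u0‖ ≤
        Real.exp (C2 * (1 + (1 / (θ * t)) ^ (σ / (1 - σ)))) *
          ‖u0‖ ^ θ * ‖indLp ω hωm (heatSG B lam t u0)‖ ^ (1 - θ) :=
  spectral_ineq_implies_observation_at_one_time_general d Ω ω hωm B lam hpos hfin σ hσ hi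
end
end

section
/- (Theorem 3.1, (ii) ⇒ (iii)) Assume (ii): there exists C2 > 0 such that for all θ ∈ (0,1), all t > 0 and all u0 ∈ L²(Ω), ‖S(t)u0‖ ≤ e^{C2(1 + (1/(θ t))^{σ/(1−σ)})} ‖u0‖^θ ‖S(t)u0‖_ω^{1−θ}. Then (iii) holds: there exists C3 > 0 such that for all ε > 0, all t > 0 and all u0 ∈ L²(Ω), ‖S(t)u0‖² ≤ e^{C3(1 + (1/t)^{σ/(1−σ)})} e^{((C3/t) ln(e + 1/ε))^σ} ‖S(t)u0‖_ω² + ε ‖u0‖². -/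
open MeasureTheory Set Filter
open scoped RealInnerProductSpace

noncomputable section

/-!
Square (ii) and split `‖u0‖ ^ (2θ) * ‖S(t)u0‖_ω ^ (2(1-θ))` by the weighted Young inequality with
`ε` in front of `‖u0‖²`: the observation term then costs `exp (2P + (2P - log ε) θ / (1 - θ))`,
where `P` is the exponent in (ii). With `L = log (e + 1/ε)` and
`θ = 1 / (2 (1 + t^σ L^(1-σ)))`, this exponent is at most `4P + 2θL`, and both
`2θL ≤ (L/t)^σ` and `(1/(θ t))^(σ/(1-σ)) ≲ (1/t)^(σ/(1-σ)) + (L/t)^σ` hold, since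
`(σ/(1-σ)) (1-σ) = σ`.
-/

open Real

lemma mul_rpow_mul_rpow_le_add {D ε X Y θ : ℝ} (hD : 0 < D) (hε : 0 < ε) (hX : 0 ≤ X)
    (hY : 0 ≤ Y) (hθ : θ ∈ Ioo 0 1) :
    D * (X ^ θ * Y ^ (1 - θ)) ≤ ε * X + D * (D / ε) ^ (θ / (1 - θ)) * Y := by
  obtain ⟨hθ0, hθ1⟩ := hθ
  have h1θ : 0 < 1 - θ := by linarith
  set M := D * (D / ε) ^ (θ / (1 - θ))
  have hM : 0 < M := by positivity
  have hD_eq : ε ^ θ * M ^ (1 - θ) = D := by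
    rw [mul_rpow hD.le (by positivity), ← rpow_mul (by positivity),
      div_mul_cancel₀ _ h1θ.ne', div_rpow hD.le hε.le]
    field_simp
    rw [← rpow_add hD, sub_add_cancel, rpow_one]
  calc D * (X ^ θ * Y ^ (1 - θ)) = (ε * X) ^ θ * (M * Y) ^ (1 - θ) := by
        rw [mul_rpow hε.le hX, mul_rpow hM.le hY, ← hD_eq]; ring
    _ ≤ θ * (ε * X) + (1 - θ) * (M * Y) :=
        geom_mean_le_arith_mean2_weighted hθ0.le h1θ.le (by positivity) (by positivity)
          (by ring)
    _ ≤ ε * X + M * Y := by nlinarith [mul_nonneg hε.le hX, mul_nonneg hM.le hY]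

lemma sq_le_add_of_le_exp_mul_rpow {y X Z P R ε θ : ℝ} (hy : 0 ≤ y) (hX : 0 ≤ X) (hZ : 0 ≤ Z)
    (hε : 0 < ε) (hθ : θ ∈ Ioo 0 1) (h : y ≤ exp P * X ^ θ * Z ^ (1 - θ))
    (hR : 2 * P + (2 * P - log ε) * (θ / (1 - θ)) ≤ R) :
    y ^ 2 ≤ exp R * Z ^ 2 + ε * X ^ 2 := by
  have hM : exp (2 * P) * (exp (2 * P) / ε) ^ (θ / (1 - θ)) ≤ exp R := by
    rw [rpow_def_of_pos (by positivity), log_div (exp_ne_zero _) hε.ne', log_exp,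
      ← exp_add, exp_le_exp]
    exact hR
  calc y ^ 2 ≤ (exp P * X ^ θ * Z ^ (1 - θ)) ^ 2 := pow_le_pow_left₀ hy h 2
    _ = exp (2 * P) * ((X ^ 2) ^ θ * (Z ^ 2) ^ (1 - θ)) := by
        rw [mul_pow, mul_pow, rpow_pow_comm hX, rpow_pow_comm hZ, ← exp_nat_mul]; push_cast; ring
    _ ≤ ε * X ^ 2 + exp (2 * P) * (exp (2 * P) / ε) ^ (θ / (1 - θ)) * Z ^ 2 :=
        mul_rpow_mul_rpow_le_add (exp_pos _) hε (sq_nonneg X) (sq_nonneg Z) hθ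
    _ ≤ exp R * Z ^ 2 + ε * X ^ 2 := by nlinarith [sq_nonneg Z]

lemma two_mul_add_sub_log_mul_le {P θ ε L : ℝ} (hP : 0 ≤ P) (hθ0 : 0 < θ) (hθ : θ ≤ 1 / 2)
    (hL : 0 ≤ L) (hεL : -log ε ≤ L) :
    2 * P + (2 * P - log ε) * (θ / (1 - θ)) ≤ 4 * P + 2 * θ * L := by
  have h1θ : 0 < 1 - θ := by linarith
  have hc : θ / (1 - θ) ≤ 2 * θ := by rw [div_le_iff₀ h1θ]; nlinarith
  have hc1 : θ / (1 - θ) ≤ 1 := by rw [div_le_one h1θ]; linarith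
  have hc0 : 0 ≤ θ / (1 - θ) := by positivity
  nlinarith [mul_le_mul_of_nonneg_left hc hL]

lemma one_le_log_exp_one_add {a : ℝ} (ha : 0 ≤ a) : 1 ≤ log (exp 1 + a) := by
  rw [le_log_iff_exp_le (by positivity)]; linarith

lemma neg_log_le_log_exp_one_add_inv {ε : ℝ} (hε : 0 < ε) : -log ε ≤ log (exp 1 + 1 / ε) := by
  rw [← log_inv, ← one_div]
  exact log_le_log (by positivity) (by linarith [exp_pos 1])

lemma max_one_rpow_le_one_add_rpow {x : ℝ} (hx : 0 ≤ x) (α : ℝ) :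
    max 1 x ^ α ≤ 1 + x ^ α := by
  rcases le_total 1 x with h | h
  · rw [max_eq_right h]; linarith
  · rw [max_eq_left h, one_rpow]; linarith [rpow_nonneg hx α]

lemma rpow_two_mul_one_add_mul_le {x s α : ℝ} (hx : 0 ≤ x) (hs : 0 ≤ s) (hα : 0 ≤ α) :
    (2 * (1 + x) * s) ^ α ≤ 4 ^ α * (s ^ α + (x * s) ^ α) := by
  calc (2 * (1 + x) * s) ^ α ≤ (4 * max 1 x * s) ^ α := by
        gcongr (?_ * s) ^ α; linarith [le_max_left 1 x, le_max_right 1 x]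
    _ = 4 ^ α * max 1 x ^ α * s ^ α := by
        rw [mul_rpow (by positivity) hs, mul_rpow (by norm_num) (by positivity)]
    _ ≤ 4 ^ α * (1 + x ^ α) * s ^ α := by
        gcongr; exact max_one_rpow_le_one_add_rpow hx α
    _ = 4 ^ α * (s ^ α + (x * s) ^ α) := by rw [mul_rpow hx hs]; ring

def interpWeight (σ t L : ℝ) : ℝ := 1 / (2 * (1 + t ^ σ * L ^ (1 - σ)))

section interpWeight

variable {σ t L : ℝ} (ht : 0 < t) (hL : 0 < L)
include ht hL

lemma interpWeight_pos : 0 < interpWeight σ t L := by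
  unfold interpWeight; positivity

lemma interpWeight_le_half : interpWeight σ t L ≤ 1 / 2 := by
  unfold interpWeight
  gcongr
  linarith [mul_pos (rpow_pos_of_pos ht σ) (rpow_pos_of_pos hL (1 - σ))]

lemma rpow_one_div_interpWeight_mul_le (hσ : σ ∈ Ioo 0 1) :
    (1 / (interpWeight σ t L * t)) ^ (σ / (1 - σ)) ≤
      4 ^ (σ / (1 - σ)) * ((1 / t) ^ (σ / (1 - σ)) + (L / t) ^ σ) := by
  obtain ⟨hσ0, hσ1⟩ := hσ
  have h1σ : (1 - σ) ≠ 0 := by linarith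
  have hxt : (t ^ σ * L ^ (1 - σ) * (1 / t)) ^ (σ / (1 - σ)) = (L / t) ^ σ := by
    have : t ^ σ * L ^ (1 - σ) * (1 / t) = (L / t) ^ (1 - σ) := by
      rw [div_rpow hL.le ht.le, rpow_sub ht, rpow_one]; field_simp
    rw [this, ← rpow_mul (by positivity), mul_div_cancel₀ _ h1σ]
  have h : 1 / (interpWeight σ t L * t) = 2 * (1 + t ^ σ * L ^ (1 - σ)) * (1 / t) := by
    unfold interpWeight; field_simp
  rw [h, ← hxt]
  exact rpow_two_mul_one_add_mul_le (by positivity) (by positivity) (div_pos hσ0 (by linarith)).le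

lemma two_mul_interpWeight_mul_le : 2 * interpWeight σ t L * L ≤ (L / t) ^ σ := by
  have hx : 0 < t ^ σ * L ^ (1 - σ) := by positivity
  calc 2 * interpWeight σ t L * L = L / (1 + t ^ σ * L ^ (1 - σ)) := by
        unfold interpWeight; field_simp
    _ ≤ L / (t ^ σ * L ^ (1 - σ)) := by gcongr; linarith
    _ = (L / t) ^ σ := by
        rw [div_rpow hL.le ht.le, rpow_sub hL, rpow_one]; field_simp

lemma four_mul_add_two_mul_interpWeight_mul_le {C : ℝ} (hC : 0 ≤ C) (hσ : σ ∈ Ioo 0 1) :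
    4 * (C * (1 + (1 / (interpWeight σ t L * t)) ^ (σ / (1 - σ)))) + 2 * interpWeight σ t L * L ≤
      (4 * C * (1 + 4 ^ (σ / (1 - σ))) + 1) * (1 + (1 / t) ^ (σ / (1 - σ))) +
        (4 * C * (1 + 4 ^ (σ / (1 - σ))) + 1) * (L / t) ^ σ := by
  have hA := rpow_one_div_interpWeight_mul_le ht hL hσ
  have hB := two_mul_interpWeight_mul_le (σ := σ) ht hL
  have h4 : 0 ≤ (4 : ℝ) ^ (σ / (1 - σ)) := by positivity
  have hs : 0 ≤ (1 / t) ^ (σ / (1 - σ)) := by positivity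
  have hl : 0 ≤ (L / t) ^ σ := by positivity
  nlinarith [mul_le_mul_of_nonneg_left hA hC, mul_nonneg hC h4, mul_nonneg (mul_nonneg hC h4) hs,
    mul_nonneg (mul_nonneg hC h4) hl, mul_nonneg hC hs, mul_nonneg hC hl]

end interpWeight

theorem observation_implies_observation_with_eps_general
    (d : ℕ) (Ω ω : Set (EuclideanSpace ℝ (Fin d)))
    (hωm : MeasurableSet ω)
    (B : HilbertBasis ℕ ℝ (Lp ℝ 2 (volume.restrict Ω)))
    (lam : ℕ → ℝ)
    (σ : ℝ) (hσ : σ ∈ Ioo (0:ℝ) 1)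
    -- (ii)
    (hii : ∃ C2 > 0, ∀ θ ∈ Ioo (0:ℝ) 1, ∀ t > 0, ∀ u0 : Lp ℝ 2 (volume.restrict Ω),
      ‖heatSG B lam t u0‖ ≤
        Real.exp (C2 * (1 + (1 / (θ * t)) ^ (σ / (1 - σ)))) *
          ‖u0‖ ^ θ * ‖indLp ω hωm (heatSG B lam t u0)‖ ^ (1 - θ)) :
    -- (iii)
    ∃ C3 > 0, ∀ ε > 0, ∀ t > 0, ∀ u0 : Lp ℝ 2 (volume.restrict Ω),
      ‖heatSG B lam t u0‖ ^ 2 ≤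
        Real.exp (C3 * (1 + (1 / t) ^ (σ / (1 - σ)))) *
          Real.exp ((C3 / t * Real.log (Real.exp 1 + 1 / ε)) ^ σ) *
            ‖indLp ω hωm (heatSG B lam t u0)‖ ^ 2
        + ε * ‖u0‖ ^ 2 := by
  obtain ⟨C2, hC2, hobs⟩ := hii
  set α := σ / (1 - σ)
  set K := 4 * C2 * (1 + 4 ^ α) + 1
  have hK : 1 ≤ K := le_add_of_nonneg_left (by positivity)
  refine ⟨K ^ σ⁻¹, by positivity, fun ε hε t ht u0 => ?_⟩
  set L := log (exp 1 + 1 / ε)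
  have hL : 1 ≤ L := one_le_log_exp_one_add (by positivity)
  set θ := interpWeight σ t L
  have hθ0 : 0 < θ := interpWeight_pos ht (by linarith)
  have hθ : θ ≤ 1 / 2 := interpWeight_le_half ht (by linarith)
  rw [← exp_add]
  refine sq_le_add_of_le_exp_mul_rpow (norm_nonneg _) (norm_nonneg _) (norm_nonneg _) hε
    ⟨hθ0, by linarith⟩ (hobs θ ⟨hθ0, by linarith⟩ t ht u0) ?_
  have hK_le : K ≤ K ^ σ⁻¹ := self_le_rpow_of_one_le hK (one_le_inv₀ hσ.1 |>.2 hσ.2.le)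
  have hC3 : (K ^ σ⁻¹ / t * L) ^ σ = K * (L / t) ^ σ := by
    rw [div_mul_eq_mul_div, mul_div_assoc, mul_rpow (by positivity) (by positivity),
      rpow_inv_rpow (by positivity) hσ.1.ne']
  calc _ ≤ 4 * (C2 * (1 + (1 / (θ * t)) ^ α)) + 2 * θ * L :=
        two_mul_add_sub_log_mul_le (by positivity) hθ0 hθ (by linarith)
          (neg_log_le_log_exp_one_add_inv hε)
    _ ≤ K * (1 + (1 / t) ^ α) + K * (L / t) ^ σ :=
        four_mul_add_two_mul_interpWeight_mul_le ht (by linarith) hC2.le hσ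
    _ ≤ K ^ σ⁻¹ * (1 + (1 / t) ^ α) + (K ^ σ⁻¹ / t * L) ^ σ := by
        rw [hC3]; gcongr

/-- Theorem 3.1, (ii) ⇒ (iii). -/
theorem observation_implies_observation_with_eps
    (d : ℕ) (hd : 1 ≤ d) (Ω ω : Set (EuclideanSpace ℝ (Fin d)))
    (hΩo : IsOpen Ω) (hΩb : Bornology.IsBounded Ω) (hΩc : IsConnected Ω)
    (hωo : IsOpen ω) (hωne : ω.Nonempty) (hωΩ : ω ⊆ Ω) (hωm : MeasurableSet ω)
    (B : HilbertBasis ℕ ℝ (Lp ℝ 2 (volume.restrict Ω)))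
    (lam : ℕ → ℝ) (hpos : ∀ j, 0 < lam j) (hmono : Monotone lam)
    (hlim : Tendsto lam atTop atTop)
    (σ : ℝ) (hσ : σ ∈ Ioo (0:ℝ) 1)
    -- (ii)
    (hii : ∃ C2 > 0, ∀ θ ∈ Ioo (0:ℝ) 1, ∀ t > 0, ∀ u0 : Lp ℝ 2 (volume.restrict Ω),
      ‖heatSG B lam t u0‖ ≤
        Real.exp (C2 * (1 + (1 / (θ * t)) ^ (σ / (1 - σ)))) *
          ‖u0‖ ^ θ * ‖indLp ω hωm (heatSG B lam t u0)‖ ^ (1 - θ)) :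
    -- (iii)
    ∃ C3 > 0, ∀ ε > 0, ∀ t > 0, ∀ u0 : Lp ℝ 2 (volume.restrict Ω),
      ‖heatSG B lam t u0‖ ^ 2 ≤
        Real.exp (C3 * (1 + (1 / t) ^ (σ / (1 - σ)))) *
          Real.exp ((C3 / t * Real.log (Real.exp 1 + 1 / ε)) ^ σ) *
            ‖indLp ω hωm (heatSG B lam t u0)‖ ^ 2
        + ε * ‖u0‖ ^ 2 :=
  observation_implies_observation_with_eps_general d Ω ω hωm B lam σ hσ hii
end
end

section
/- (Theorem 3.1, (iv) ⇒ (i)) Assume (iv): there exists C4 > 0 such that for all t > 0 and all u0 ∈ L²(Ω) with u0 ≠ 0, ‖S(t)u0‖ ≤ e^{C4(1 + (1/t)^{σ/(1−σ)})} e^{((C4/t) ln( ‖u0‖ / ‖S(t)u0‖ ))^σ} ‖S(t)u0‖_ω. Then (i) holds: there exists C1 > 0 such that for every Λ > 0 and every real sequence (a_j), Σ_{j : λ_j ≤ Λ} |a_j|² ≤ e^{C1(1+Λ^σ)} ∫_ω | Σ_{j : λ_j ≤ Λ} a_j Φ_j |². -/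
open MeasureTheory Set Filter
open scoped RealInnerProductSpace

noncomputable section

/-!
Given coefficients `a_j` with `λ_j ≤ Λ`, apply (iv) to the backward datum
`w = ∑ e^{λ_j t} a_j Φ_j`, for which `S(t) w = u := ∑ a_j Φ_j`. Orthonormality gives
`‖u‖ ≤ ‖w‖ ≤ e^{Λ t} ‖u‖`, so the logarithm in (iv) lies in `[0, Λ t]`, and the choice
`t = Λ^{σ-1}` makes both exponents `C4 (1 + t^{-σ/(1-σ)})` and `(C4 Λ)^σ` of order `1 + Λ^σ`.
-/

open Real

namespace Orthonormal

variable {ι E : Type*} [NormedAddCommGroup E] [InnerProductSpace ℝ E] {v : ι → E}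

theorem norm_sum_smul_sq_s12 (hv : Orthonormal ℝ v) (s : Finset ι) (c : ι → ℝ) :
    ‖∑ j ∈ s, c j • v j‖ ^ 2 = ∑ j ∈ s, c j ^ 2 := by
  rw [← real_inner_self_eq_norm_sq, hv.inner_sum]
  simp only [conj_trivial, sq]

theorem norm_sum_smul_le_of_abs_le (hv : Orthonormal ℝ v) {s : Finset ι} {c c' : ι → ℝ}
    (h : ∀ j ∈ s, |c j| ≤ |c' j|) : ‖∑ j ∈ s, c j • v j‖ ≤ ‖∑ j ∈ s, c' j • v j‖ := by
  refine (sq_le_sq₀ (norm_nonneg _) (norm_nonneg _)).mp ?_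
  rw [hv.norm_sum_smul_sq_s12, hv.norm_sum_smul_sq_s12]
  exact Finset.sum_le_sum fun j hj => sq_le_sq.mpr (h j hj)

theorem inner_sum_smul_left_of_notMem (hv : Orthonormal ℝ v) {s : Finset ι} (c : ι → ℝ) {k : ι}
    (hk : k ∉ s) : ⟪∑ j ∈ s, c j • v j, v k⟫ = 0 := by
  classical
  rw [sum_inner]
  refine Finset.sum_eq_zero fun j hj => ?_
  rw [real_inner_smul_left, orthonormal_iff_ite.mp hv, if_neg (ne_of_mem_of_not_mem hj hk),
    mul_zero]

theorem norm_sum_smul_le_norm_sum_exp_mul_smul (hv : Orthonormal ℝ v) {s : Finset ι}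
    {μ : ι → ℝ} {t : ℝ} (ht : 0 ≤ t) (hμ : ∀ j ∈ s, 0 ≤ μ j) (a : ι → ℝ) :
    ‖∑ j ∈ s, a j • v j‖ ≤ ‖∑ j ∈ s, (exp (μ j * t) * a j) • v j‖ :=
  hv.norm_sum_smul_le_of_abs_le fun j hj => by
    rw [abs_mul, abs_exp]
    exact le_mul_of_one_le_left (abs_nonneg _) (one_le_exp (mul_nonneg (hμ j hj) ht))

theorem norm_sum_exp_mul_smul_le (hv : Orthonormal ℝ v) {s : Finset ι} {μ : ι → ℝ} {t Λ : ℝ}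
    (ht : 0 ≤ t) (hμ : ∀ j ∈ s, μ j ≤ Λ) (a : ι → ℝ) :
    ‖∑ j ∈ s, (exp (μ j * t) * a j) • v j‖ ≤ exp (Λ * t) * ‖∑ j ∈ s, a j • v j‖ :=
  calc ‖∑ j ∈ s, (exp (μ j * t) * a j) • v j‖ ≤ ‖∑ j ∈ s, (exp (Λ * t) * a j) • v j‖ :=
        hv.norm_sum_smul_le_of_abs_le fun j hj => by
          rw [abs_mul, abs_mul, abs_exp, abs_exp]
          gcongr
          exact hμ j hj
    _ = exp (Λ * t) * ‖∑ j ∈ s, a j • v j‖ := by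
        simp_rw [mul_smul]
        rw [← Finset.smul_sum, norm_smul, norm_of_nonneg (exp_pos _).le]

end Orthonormal

section HeatSemigroup

variable {d : ℕ} {Ω : Set (EuclideanSpace ℝ (Fin d))}
  (B : HilbertBasis ℕ ℝ (Lp ℝ 2 (volume.restrict Ω))) (lam : ℕ → ℝ)

theorem heatSG_sum_smul (t : ℝ) (s : Finset ℕ) (c : ℕ → ℝ) :
    heatSG B lam t (∑ j ∈ s, c j • B j) = ∑ j ∈ s, (exp (-lam j * t) * c j) • B j := by
  rw [heatSG, tsum_eq_sum (s := s) fun j hj => by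
    rw [B.orthonormal.inner_sum_smul_left_of_notMem c hj, mul_zero, zero_smul]]
  refine Finset.sum_congr rfl fun j hj => ?_
  rw [B.orthonormal.inner_left_sum c hj, conj_trivial]

theorem heatSG_sum_exp_mul_smul (t : ℝ) (s : Finset ℕ) (a : ℕ → ℝ) :
    heatSG B lam t (∑ j ∈ s, (exp (lam j * t) * a j) • B j) = ∑ j ∈ s, a j • B j := by
  rw [heatSG_sum_smul]
  refine Finset.sum_congr rfl fun j _ => ?_
  rw [← mul_assoc, ← exp_add, neg_mul, neg_add_cancel, exp_zero, one_mul]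

end HeatSemigroup

theorem one_div_rpow_sub_one_rpow_div {Λ σ : ℝ} (hΛ : 0 < Λ) (hσ : σ < 1) :
    (1 / Λ ^ (σ - 1)) ^ (σ / (1 - σ)) = Λ ^ σ := by
  rw [one_div, ← rpow_neg hΛ.le, neg_sub, ← rpow_mul hΛ.le,
    mul_div_cancel₀ σ (sub_ne_zero.mpr hσ.ne')]

theorem div_mul_rpow_le {C t L Λ σ : ℝ} (hC : 0 ≤ C) (ht : 0 < t) (hσ : 0 ≤ σ) (hL : 0 ≤ L)
    (hLΛ : L ≤ Λ * t) : (C / t * L) ^ σ ≤ C ^ σ * Λ ^ σ := by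
  have hΛ : 0 ≤ Λ := nonneg_of_mul_nonneg_left (hL.trans hLΛ) ht
  rw [← mul_rpow hC hΛ]
  refine rpow_le_rpow (by positivity) ?_ hσ
  calc C / t * L ≤ C / t * (Λ * t) := by gcongr
    _ = C * Λ := by field_simp

theorem norm_sum_smul_le_of_log_observation {d : ℕ} {Ω ω : Set (EuclideanSpace ℝ (Fin d))}
    (hωm : MeasurableSet ω) (B : HilbertBasis ℕ ℝ (Lp ℝ 2 (volume.restrict Ω))) {lam : ℕ → ℝ}
    (hlam : ∀ j, 0 ≤ lam j) {σ C : ℝ} (hσ : σ ∈ Ioo (0 : ℝ) 1) (hC : 0 ≤ C)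
    (hobs : ∀ t > 0, ∀ u0 : Lp ℝ 2 (volume.restrict Ω), u0 ≠ 0 →
      ‖heatSG B lam t u0‖ ≤
        exp (C * (1 + (1 / t) ^ (σ / (1 - σ)))) *
          exp ((C / t * log (‖u0‖ / ‖heatSG B lam t u0‖)) ^ σ) *
            ‖indLp ω hωm (heatSG B lam t u0)‖)
    {Λ : ℝ} (hΛ : 0 < Λ) {s : Finset ℕ} (hs : ∀ j ∈ s, lam j ≤ Λ) (a : ℕ → ℝ) :
    ‖∑ j ∈ s, a j • B j‖ ≤
      exp ((C + C ^ σ) * (1 + Λ ^ σ)) * ‖indLp ω hωm (∑ j ∈ s, a j • B j)‖ := by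
  set u := ∑ j ∈ s, a j • B j
  rcases eq_or_ne u 0 with hu | hu
  · rw [hu, norm_zero]
    positivity
  set t := Λ ^ (σ - 1)
  have ht : 0 < t := rpow_pos_of_pos hΛ _
  set w := ∑ j ∈ s, (exp (lam j * t) * a j) • B j
  have hSw : heatSG B lam t w = u := heatSG_sum_exp_mul_smul B lam t s a
  have huw : ‖u‖ ≤ ‖w‖ :=
    B.orthonormal.norm_sum_smul_le_norm_sum_exp_mul_smul ht.le (fun j _ => hlam j) a
  have hwu : ‖w‖ ≤ exp (Λ * t) * ‖u‖ := B.orthonormal.norm_sum_exp_mul_smul_le ht.le hs a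
  have hu0 : 0 < ‖u‖ := norm_pos_iff.mpr hu
  have hlog0 : 0 ≤ log (‖w‖ / ‖u‖) := log_nonneg ((one_le_div hu0).mpr huw)
  have hlog : log (‖w‖ / ‖u‖) ≤ Λ * t :=
    (log_le_iff_le_exp (div_pos (hu0.trans_le huw) hu0)).mpr ((div_le_iff₀ hu0).mpr hwu)
  have hw : w ≠ 0 := norm_pos_iff.mp (hu0.trans_le huw)
  have hobs_w := hobs t ht w hw
  rw [hSw, one_div_rpow_sub_one_rpow_div hΛ hσ.2] at hobs_w
  calc ‖u‖ ≤ exp (C * (1 + Λ ^ σ)) * exp ((C / t * log (‖w‖ / ‖u‖)) ^ σ) *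
        ‖indLp ω hωm u‖ := hobs_w
    _ ≤ exp (C * (1 + Λ ^ σ)) * exp (C ^ σ * Λ ^ σ) * ‖indLp ω hωm u‖ := by
        gcongr
        exact div_mul_rpow_le hC ht hσ.1.le hlog0 hlog
    _ ≤ exp ((C + C ^ σ) * (1 + Λ ^ σ)) * ‖indLp ω hωm u‖ := by
        rw [← exp_add]
        gcongr
        nlinarith [rpow_nonneg hC σ, rpow_nonneg hΛ.le σ]

theorem log_observation_implies_spectral_ineq_general
    (d : ℕ) (Ω ω : Set (EuclideanSpace ℝ (Fin d)))
    (hωm : MeasurableSet ω)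
    (B : HilbertBasis ℕ ℝ (Lp ℝ 2 (volume.restrict Ω)))
    (lam : ℕ → ℝ) (hpos : ∀ j, 0 < lam j)
    (hfin : ∀ Λ : ℝ, {j : ℕ | lam j ≤ Λ}.Finite)
    (σ : ℝ) (hσ : σ ∈ Ioo (0:ℝ) 1)
    -- (iv)
    (hiv : ∃ C4 > 0, ∀ t > 0, ∀ u0 : Lp ℝ 2 (volume.restrict Ω), u0 ≠ 0 →
      ‖heatSG B lam t u0‖ ≤
        Real.exp (C4 * (1 + (1 / t) ^ (σ / (1 - σ)))) *
          Real.exp ((C4 / t * Real.log (‖u0‖ / ‖heatSG B lam t u0‖)) ^ σ) *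
            ‖indLp ω hωm (heatSG B lam t u0)‖) :
    -- (i)
    ∃ C1 > 0, ∀ Λ > 0, ∀ a : ℕ → ℝ,
      ∑ j ∈ (hfin Λ).toFinset, (a j) ^ 2 ≤
        Real.exp (C1 * (1 + Λ ^ σ)) *
          ‖indLp ω hωm (∑ j ∈ (hfin Λ).toFinset, a j • B j)‖ ^ 2 := by
  obtain ⟨C4, hC4, hobs⟩ := hiv
  refine ⟨2 * (C4 + C4 ^ σ), by positivity, fun Λ hΛ a => ?_⟩
  have hobs_Λ := norm_sum_smul_le_of_log_observation hωm B (fun j => (hpos j).le) hσ hC4.le hobs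
    hΛ (fun j hj => (hfin Λ).mem_toFinset.mp hj) a
  rw [← B.orthonormal.norm_sum_smul_sq_s12]
  calc _ ≤ (exp ((C4 + C4 ^ σ) * (1 + Λ ^ σ)) * _) ^ 2 := by gcongr
    _ = _ := by rw [mul_pow, sq (exp _), ← exp_add, ← two_mul, mul_assoc]

/-- Theorem 3.1, (iv) ⇒ (i). -/
theorem log_observation_implies_spectral_ineq
    (d : ℕ) (hd : 1 ≤ d) (Ω ω : Set (EuclideanSpace ℝ (Fin d)))
    (hΩo : IsOpen Ω) (hΩb : Bornology.IsBounded Ω) (hΩc : IsConnected Ω)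
    (hωo : IsOpen ω) (hωne : ω.Nonempty) (hωΩ : ω ⊆ Ω) (hωm : MeasurableSet ω)
    (B : HilbertBasis ℕ ℝ (Lp ℝ 2 (volume.restrict Ω)))
    (lam : ℕ → ℝ) (hpos : ∀ j, 0 < lam j) (hmono : Monotone lam)
    (hlim : Tendsto lam atTop atTop)
    (hfin : ∀ Λ : ℝ, {j : ℕ | lam j ≤ Λ}.Finite)
    (σ : ℝ) (hσ : σ ∈ Ioo (0:ℝ) 1)
    -- (iv)
    (hiv : ∃ C4 > 0, ∀ t > 0, ∀ u0 : Lp ℝ 2 (volume.restrict Ω), u0 ≠ 0 →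
      ‖heatSG B lam t u0‖ ≤
        Real.exp (C4 * (1 + (1 / t) ^ (σ / (1 - σ)))) *
          Real.exp ((C4 / t * Real.log (‖u0‖ / ‖heatSG B lam t u0‖)) ^ σ) *
            ‖indLp ω hωm (heatSG B lam t u0)‖) :
    -- (i)
    ∃ C1 > 0, ∀ Λ > 0, ∀ a : ℕ → ℝ,
      ∑ j ∈ (hfin Λ).toFinset, (a j) ^ 2 ≤
        Real.exp (C1 * (1 + Λ ^ σ)) *
          ‖indLp ω hωm (∑ j ∈ (hfin Λ).toFinset, a j • B j)‖ ^ 2 :=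
  log_observation_implies_spectral_ineq_general d Ω ω hωm B lam hpos hfin σ hσ hiv
end
end

section
/- (Theorem 3.3, control to a target implies dual observation) Let 0 ≤ T0 < T1 < T2 and ℓ, ε > 0. Assume (C): for every y_d ∈ L²(Ω) with ⟨P y_d, y_d⟩ := Σ_{j≥1} λ_j ⟨y_d, Φ_j⟩² < ∞, there exists f ∈ L²(Ω) such that (1/ℓ) ‖1_ω f‖² + (1/ε) ‖S(T2−T1)(1_ω f) − y_d‖² ≤ ⟨P y_d, y_d⟩. Then (O) holds: for every u0 ∈ L²(Ω), ⟨P⁻¹ u0, u0⟩ := Σ_{j≥1} λ_j^{−1} ⟨u0, Φ_j⟩² ≤ ℓ ‖S(T2−T1) u0‖_ω² + ε ‖u0‖². -/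
open MeasureTheory Set Filter
open scoped RealInnerProductSpace

noncomputable section

/-!
Test (C) on the truncation `y_d = ∑_{j ∈ s} λ_j⁻¹ ⟨u0, Φ_j⟩ Φ_j` of `P⁻¹ u0`, for which
`⟨P y_d, y_d⟩ = ⟨u0, y_d⟩ =: p_s`. Since `S(t)` and `1_ω` are symmetric, the control `f` splits
`p_s = ⟨u0, y_d - S(T2-T1)(1_ω f)⟩ + ⟨1_ω S(T2-T1) u0, 1_ω f⟩`, and Cauchy–Schwarz weighted by
`ℓ` and `ε`, combined with the cost bound on `f`, gives `p_s² ≤ (ℓ ‖S(T2-T1) u0‖_ω² + ε ‖u0‖²) p_s`.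
Letting `s` exhaust `ℕ` yields (O).
-/

section InnerProductSpace

variable {ι E : Type*} [NormedAddCommGroup E] [InnerProductSpace ℝ E]

theorem HilbertBasis.summable_mul_inner_smul (b : HilbertBasis ι ℝ E) {c : ι → ℝ} {C : ℝ}
    (hc : ∀ i, |c i| ≤ C) (u : E) : Summable fun i => (c i * ⟪u, b i⟫) • b i := by
  have hmem : Memℓp (fun i => c i * ⟪u, b i⟫) 2 := by
    refine ((lp.memℓp (b.repr u)).norm.const_mul C).mono fun i => ?_
    rw [norm_mul, b.repr_apply_apply, real_inner_comm, Real.norm_eq_abs]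
    exact mul_le_mul_of_nonneg_right (hc i) (norm_nonneg _)
  exact (b.hasSum_repr_symm ⟨_, hmem⟩).summable

/-- The finite-rank approximation `∑_{j ∈ s} lam_j⁻¹ ⟨u, v_j⟩ v_j` of `P⁻¹ u`. -/
def truncInv (v : ι → E) (lam : ι → ℝ) (s : Finset ι) (u : E) : E :=
  ∑ j ∈ s, ((lam j)⁻¹ * ⟪u, v j⟫) • v j

variable {v : ι → E} {lam : ι → ℝ} {s : Finset ι}

theorem Orthonormal.inner_truncInv_left [DecidableEq ι] (hv : Orthonormal ℝ v) (u : E) (k : ι) :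
    ⟪truncInv v lam s u, v k⟫ = if k ∈ s then (lam k)⁻¹ * ⟪u, v k⟫ else 0 := by
  split_ifs with hk
  · exact hv.inner_left_sum _ hk
  · simp only [truncInv, sum_inner, real_inner_smul_left, orthonormal_iff_ite.mp hv]
    exact Finset.sum_eq_zero fun j hj => by rw [if_neg (ne_of_mem_of_not_mem hj hk)]; ring

theorem inner_truncInv_right (u : E) :
    ⟪u, truncInv v lam s u⟫ = ∑ j ∈ s, (lam j)⁻¹ * ⟪u, v j⟫ ^ 2 := by
  simp only [truncInv, inner_sum, real_inner_smul_right]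
  exact Finset.sum_congr rfl fun j _ => by ring

theorem Orthonormal.hasSum_mul_inner_truncInv_sq (hv : Orthonormal ℝ v) (hlam : ∀ j, lam j ≠ 0)
    (u : E) :
    HasSum (fun j => lam j * ⟪truncInv v lam s u, v j⟫ ^ 2)
      (∑ j ∈ s, (lam j)⁻¹ * ⟪u, v j⟫ ^ 2) := by
  classical
  have hcoeff := hv.inner_truncInv_left (lam := lam) (s := s) u
  have hsum : ∑ j ∈ s, lam j * ⟪truncInv v lam s u, v j⟫ ^ 2
      = ∑ j ∈ s, (lam j)⁻¹ * ⟪u, v j⟫ ^ 2 :=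
    Finset.sum_congr rfl fun j hj => by rw [hcoeff, if_pos hj]; field_simp [hlam j]
  exact hsum ▸ hasSum_sum_of_ne_finset_zero fun k hk => by simp [hcoeff, hk]

end InnerProductSpace

theorem mul_add_mul_sq_le (x y a b : ℝ) {ℓ ε : ℝ} (hℓ : 0 < ℓ) (hε : 0 < ε) :
    (y * b + x * a) ^ 2 ≤ (ℓ * x ^ 2 + ε * y ^ 2) * (1 / ℓ * a ^ 2 + 1 / ε * b ^ 2) := by
  have key : (ℓ * x ^ 2 + ε * y ^ 2) * (1 / ℓ * a ^ 2 + 1 / ε * b ^ 2) - (y * b + x * a) ^ 2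
      = (ℓ * x * b - ε * y * a) ^ 2 / (ℓ * ε) := by
    field_simp
    ring
  have : 0 ≤ (ℓ * x * b - ε * y * a) ^ 2 / (ℓ * ε) := by positivity
  linarith

theorem le_of_le_mul_add_mul_of_cost_le {x y a b P ℓ ε : ℝ} (hℓ : 0 < ℓ) (hε : 0 < ε)
    (hcost : 1 / ℓ * a ^ 2 + 1 / ε * b ^ 2 ≤ P) (hP : P ≤ y * b + x * a) :
    P ≤ ℓ * x ^ 2 + ε * y ^ 2 := by
  have hR : 0 ≤ ℓ * x ^ 2 + ε * y ^ 2 := by positivity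
  rcases le_or_gt P 0 with hP0 | hP0
  · exact hP0.trans hR
  refine le_of_mul_le_mul_right ?_ hP0
  calc P * P ≤ (y * b + x * a) ^ 2 := by nlinarith
    _ ≤ (ℓ * x ^ 2 + ε * y ^ 2) * (1 / ℓ * a ^ 2 + 1 / ε * b ^ 2) := mul_add_mul_sq_le x y a b hℓ hε
    _ ≤ (ℓ * x ^ 2 + ε * y ^ 2) * P := mul_le_mul_of_nonneg_left hcost hR

section Lp

variable {d : ℕ} {Ω ω : Set (EuclideanSpace ℝ (Fin d))}

theorem heatSG_hasSum (B : HilbertBasis ℕ ℝ (Lp ℝ 2 (volume.restrict Ω))) {lam : ℕ → ℝ}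
    (hlam : ∀ j, 0 ≤ lam j) {t : ℝ} (ht : 0 ≤ t) (u : Lp ℝ 2 (volume.restrict Ω)) :
    HasSum (fun j => (Real.exp (-(lam j) * t) * ⟪u, B j⟫) • B j) (heatSG B lam t u) := by
  have hbound (j : ℕ) : |Real.exp (-(lam j) * t)| ≤ 1 := by
    rw [abs_of_pos (Real.exp_pos _), Real.exp_le_one_iff, neg_mul, neg_nonpos]
    exact mul_nonneg (hlam j) ht
  exact (B.summable_mul_inner_smul hbound u).hasSum

theorem heatSG_hasSum_inner (B : HilbertBasis ℕ ℝ (Lp ℝ 2 (volume.restrict Ω))) {lam : ℕ → ℝ}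
    (hlam : ∀ j, 0 ≤ lam j) {t : ℝ} (ht : 0 ≤ t) (u v : Lp ℝ 2 (volume.restrict Ω)) :
    HasSum (fun j => Real.exp (-(lam j) * t) * ⟪u, B j⟫ * ⟪v, B j⟫) ⟪v, heatSG B lam t u⟫ := by
  refine ((heatSG_hasSum B hlam ht u).mapL (innerSL ℝ v)).congr_fun fun j => ?_
  simp [mul_assoc]

theorem inner_heatSG_comm (B : HilbertBasis ℕ ℝ (Lp ℝ 2 (volume.restrict Ω))) {lam : ℕ → ℝ}
    (hlam : ∀ j, 0 ≤ lam j) {t : ℝ} (ht : 0 ≤ t) (u v : Lp ℝ 2 (volume.restrict Ω)) :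
    ⟪heatSG B lam t u, v⟫ = ⟪u, heatSG B lam t v⟫ := by
  rw [real_inner_comm]
  refine (heatSG_hasSum_inner B hlam ht u v).unique ?_
  exact (heatSG_hasSum_inner B hlam ht v u).congr_fun fun j => by ring

theorem inner_indLp_right (hω : MeasurableSet ω) (g f : Lp ℝ 2 (volume.restrict Ω)) :
    ⟪g, indLp ω hω f⟫ = ⟪indLp ω hω g, indLp ω hω f⟫ := by
  rw [L2.inner_def, L2.inner_def]
  refine integral_congr_ae ?_
  have hf : (indLp ω hω f : _ → ℝ) =ᵐ[volume.restrict Ω] ω.indicator f := MemLp.coeFn_toLp _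
  have hg : (indLp ω hω g : _ → ℝ) =ᵐ[volume.restrict Ω] ω.indicator g := MemLp.coeFn_toLp _
  filter_upwards [hf, hg] with x hfx hgx
  rw [hfx, hgx]
  by_cases hx : x ∈ ω <;> simp [hx]

end Lp

theorem target_control_implies_dual_observation_general
    (d : ℕ) (Ω ω : Set (EuclideanSpace ℝ (Fin d)))
    (hωm : MeasurableSet ω)
    (B : HilbertBasis ℕ ℝ (Lp ℝ 2 (volume.restrict Ω)))
    (lam : ℕ → ℝ) (hpos : ∀ j, 0 < lam j)
    (T1 T2 : ℝ) (hT12 : T1 < T2)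
    (ℓ ε : ℝ) (hℓ : 0 < ℓ) (hε : 0 < ε)
    -- (C)
    (hC : ∀ yd : Lp ℝ 2 (volume.restrict Ω),
      Summable (fun j => lam j * ⟪yd, B j⟫ ^ 2) →
      ∃ f : Lp ℝ 2 (volume.restrict Ω),
        (1 / ℓ) * ‖indLp ω hωm f‖ ^ 2 +
          (1 / ε) * ‖heatSG B lam (T2 - T1) (indLp ω hωm f) - yd‖ ^ 2
        ≤ ∑' j, lam j * ⟪yd, B j⟫ ^ 2) :
    -- (O)
    ∀ u0 : Lp ℝ 2 (volume.restrict Ω),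
      (∑' j, (lam j)⁻¹ * ⟪u0, B j⟫ ^ 2) ≤
        ℓ * ‖indLp ω hωm (heatSG B lam (T2 - T1) u0)‖ ^ 2 + ε * ‖u0‖ ^ 2 := by
  intro u0
  have hlam (j : ℕ) : 0 ≤ lam j := (hpos j).le
  have ht : 0 ≤ T2 - T1 := by linarith
  refine tsum_le_of_sum_le' (by positivity) fun s => ?_
  set yd := truncInv B lam s u0
  have hyd := B.orthonormal.hasSum_mul_inner_truncInv_sq (s := s) (fun j => (hpos j).ne') u0
  obtain ⟨f, hf⟩ := hC yd hyd.summable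
  set Sf := heatSG B lam (T2 - T1) (indLp ω hωm f)
  refine le_of_le_mul_add_mul_of_cost_le hℓ hε (hyd.tsum_eq ▸ hf) ?_
  calc ∑ j ∈ s, (lam j)⁻¹ * ⟪u0, B j⟫ ^ 2
      = ⟪u0, yd - Sf⟫ + ⟪indLp ω hωm (heatSG B lam (T2 - T1) u0), indLp ω hωm f⟫ := by
        rw [← inner_indLp_right, inner_heatSG_comm B hlam ht, ← inner_add_right, sub_add_cancel,
          inner_truncInv_right]
    _ ≤ ‖u0‖ * ‖Sf - yd‖ + ‖indLp ω hωm (heatSG B lam (T2 - T1) u0)‖ * ‖indLp ω hωm f‖ := by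
        rw [norm_sub_rev]
        exact add_le_add (real_inner_le_norm _ _) (real_inner_le_norm _ _)

/-- Theorem 3.3, control to a target implies dual observation. -/
theorem target_control_implies_dual_observation
    (d : ℕ) (hd : 1 ≤ d) (Ω ω : Set (EuclideanSpace ℝ (Fin d)))
    (hΩo : IsOpen Ω) (hΩb : Bornology.IsBounded Ω) (hΩc : IsConnected Ω)
    (hωo : IsOpen ω) (hωne : ω.Nonempty) (hωΩ : ω ⊆ Ω) (hωm : MeasurableSet ω)
    (B : HilbertBasis ℕ ℝ (Lp ℝ 2 (volume.restrict Ω)))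
    (lam : ℕ → ℝ) (hpos : ∀ j, 0 < lam j) (hmono : Monotone lam)
    (hlim : Tendsto lam atTop atTop)
    (T0 T1 T2 : ℝ) (hT0 : 0 ≤ T0) (hT01 : T0 < T1) (hT12 : T1 < T2)
    (ℓ ε : ℝ) (hℓ : 0 < ℓ) (hε : 0 < ε)
    -- (C)
    (hC : ∀ yd : Lp ℝ 2 (volume.restrict Ω),
      Summable (fun j => lam j * ⟪yd, B j⟫ ^ 2) →
      ∃ f : Lp ℝ 2 (volume.restrict Ω),
        (1 / ℓ) * ‖indLp ω hωm f‖ ^ 2 +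
          (1 / ε) * ‖heatSG B lam (T2 - T1) (indLp ω hωm f) - yd‖ ^ 2
        ≤ ∑' j, lam j * ⟪yd, B j⟫ ^ 2) :
    -- (O)
    ∀ u0 : Lp ℝ 2 (volume.restrict Ω),
      (∑' j, (lam j)⁻¹ * ⟪u0, B j⟫ ^ 2) ≤
        ℓ * ‖indLp ω hωm (heatSG B lam (T2 - T1) u0)‖ ^ 2 + ε * ‖u0‖ ^ 2 :=
  target_control_implies_dual_observation_general d Ω ω hωm B lam hpos T1 T2 hT12 ℓ ε hℓ hε hC
end
end

section
/- (Theorem 3.3, dual observation implies control to a target) Let 0 ≤ T0 < T1 < T2 and ℓ, ε > 0. Assume (O): for every u0 ∈ L²(Ω), ⟨P⁻¹ u0, u0⟩ := Σ_{j≥1} λ_j^{−1} ⟨u0, Φ_j⟩² ≤ ℓ ‖S(T2−T1) u0‖_ω² + ε ‖u0‖². Then (C) holds: for every y_d ∈ L²(Ω) with ⟨P y_d, y_d⟩ := Σ_{j≥1} λ_j ⟨y_d, Φ_j⟩² < ∞, there exists f ∈ L²(Ω) such that (1/ℓ) ‖1_ω f‖² + (1/ε) ‖S(T2−T1)(1_ω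 f) − y_d‖² ≤ ⟨P y_d, y_d⟩. -/
open MeasureTheory Set Filter
open scoped RealInnerProductSpace

noncomputable section

/-! With the control operator `L = S(T2 - T1) ∘ 1_ω`, take `u` solving `(ℓ L L† + ε) u = y_d`
(Lax–Milgram) and the control `f = ℓ L† u`. Then `L f - y_d = -ε u`, so the cost of `f` equals
`⟪y_d, u⟫ = ℓ ‖L† u‖² + ε ‖u‖²`. Coordinatewise AM–GM gives
`2 ⟪y_d, u⟫ ≤ ⟨P y_d, y_d⟩ + ⟨P⁻¹ u, u⟩`, and by (O) the last term is at most the cost itself,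
whence cost ≤ `⟨P y_d, y_d⟩`. The heat semigroup and `1_ω` are symmetric, hence bounded and
self-adjoint by Hellinger–Toeplitz, so `L† = 1_ω ∘ S(T2 - T1)` is the observation operator of (O). -/

open scoped InnerProduct

section Control

variable {E F : Type*} [NormedAddCommGroup E] [InnerProductSpace ℝ E] [CompleteSpace E]
  [NormedAddCommGroup F] [InnerProductSpace ℝ F] [CompleteSpace F]

theorem exists_smul_apply_adjoint_add_smul_eq (L : F →L[ℝ] E) {ℓ ε : ℝ} (hℓ : 0 ≤ ℓ)
    (hε : 0 < ε) (y : E) : ∃ u, ℓ • L ((L†) u) + ε • u = y := by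
  set A : E →L[ℝ] E := ℓ • (L ∘L L†) + ε • ContinuousLinearMap.id ℝ E with hA
  have hcoercive : IsCoercive (innerSL ℝ ∘L A) := by
    refine ⟨ε, hε, fun u => ?_⟩
    have hAu : ⟪A u, u⟫ = ℓ * ‖(L†) u‖ ^ 2 + ε * ‖u‖ ^ 2 := by
      simp [hA, inner_add_left, real_inner_smul_left, ← L.adjoint_inner_right]
    change ε * ‖u‖ * ‖u‖ ≤ ⟪A u, u⟫
    nlinarith [sq_nonneg ‖(L†) u‖]
  set u := hcoercive.continuousLinearEquivOfBilin.symm y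
  refine ⟨u, ext_inner_right ℝ fun w => ?_⟩
  have h := hcoercive.continuousLinearEquivOfBilin_apply u w
  rw [ContinuousLinearEquiv.apply_symm_apply] at h
  exact h.symm

theorem exists_control_of_observability (L : F →L[ℝ] E) {ℓ ε p : ℝ} (hℓ : 0 < ℓ) (hε : 0 < ε)
    {Q : E → ℝ} {y : E} (hobs : ∀ u, Q u ≤ ℓ * ‖(L†) u‖ ^ 2 + ε * ‖u‖ ^ 2)
    (hdual : ∀ u, 2 * ⟪y, u⟫ ≤ p + Q u) :
    ∃ f ∈ (L†).range, (1 / ℓ) * ‖f‖ ^ 2 + (1 / ε) * ‖L f - y‖ ^ 2 ≤ p := by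
  obtain ⟨u, hu⟩ := exists_smul_apply_adjoint_add_smul_eq L hℓ.le hε y
  refine ⟨ℓ • (L†) u, ⟨ℓ • u, map_smul _ _ _⟩, ?_⟩
  have hcost : (1 / ℓ) * ‖ℓ • (L†) u‖ ^ 2 + (1 / ε) * ‖L (ℓ • (L†) u) - y‖ ^ 2
      = ℓ * ‖(L†) u‖ ^ 2 + ε * ‖u‖ ^ 2 := by
    rw [map_smul, ← hu, sub_add_cancel_left, norm_neg, norm_smul, norm_smul,
      Real.norm_of_nonneg hℓ.le, Real.norm_of_nonneg hε.le]
    field_simp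
  have hpairing : ⟪y, u⟫ = ℓ * ‖(L†) u‖ ^ 2 + ε * ‖u‖ ^ 2 := by
    rw [← hu, inner_add_left, real_inner_smul_left, real_inner_smul_left,
      ← L.adjoint_inner_right, real_inner_self_eq_norm_sq, real_inner_self_eq_norm_sq]
  linarith [hdual u, hobs u]

end Control

theorem two_mul_le_mul_sq_add_inv_mul_sq {c : ℝ} (hc : 0 < c) (a b : ℝ) :
    2 * (a * b) ≤ c * a ^ 2 + c⁻¹ * b ^ 2 := by
  have h : c * a ^ 2 + c⁻¹ * b ^ 2 - 2 * (a * b) = c⁻¹ * (c * a - b) ^ 2 := by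
    field_simp
    ring
  have hsq : 0 ≤ c⁻¹ * (c * a - b) ^ 2 := by positivity
  linarith

namespace HilbertBasis

variable {ι E : Type*} [NormedAddCommGroup E] [InnerProductSpace ℝ E] (B : HilbertBasis ι ℝ E)
  {m : ι → ℝ} {C : ℝ}

theorem summable_inner_sq (u : E) : Summable fun j => ⟪u, B j⟫ ^ 2 :=
  (B.summable_inner_mul_inner u u).congr fun j => by rw [real_inner_comm (B j) u, sq]

theorem summable_inv_mul_inner_sq {lam : ι → ℝ} {c : ℝ} (hc : 0 < c) (hlam : ∀ j, c ≤ lam j)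
    (u : E) : Summable fun j => (lam j)⁻¹ * ⟪u, B j⟫ ^ 2 :=
  ((B.summable_inner_sq u).mul_left c⁻¹).of_nonneg_of_le
    (fun j => mul_nonneg (inv_nonneg.2 (hc.trans_le (hlam j)).le) (sq_nonneg _))
    (fun j => mul_le_mul_of_nonneg_right (inv_anti₀ hc (hlam j)) (sq_nonneg _))

theorem two_mul_inner_le_tsum_add_tsum {lam : ι → ℝ} (hlam : ∀ j, 0 < lam j) {y u : E}
    (hy : Summable fun j => lam j * ⟪y, B j⟫ ^ 2)
    (hu : Summable fun j => (lam j)⁻¹ * ⟪u, B j⟫ ^ 2) :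
    2 * ⟪y, u⟫ ≤ ∑' j, lam j * ⟪y, B j⟫ ^ 2 + ∑' j, (lam j)⁻¹ * ⟪u, B j⟫ ^ 2 := by
  refine hasSum_le (fun j => ?_) ((B.hasSum_inner_mul_inner y u).mul_left 2)
    (hy.hasSum.add hu.hasSum)
  rw [real_inner_comm (B j) u]
  exact two_mul_le_mul_sq_add_inv_mul_sq (hlam j) _ _

theorem memℓp_mul_inner (hm : ∀ j, |m j| ≤ C) (u : E) :
    Memℓp (fun j => m j * ⟪u, B j⟫) 2 :=
  ((lp.memℓp (B.repr u)).norm.const_mul C).mono fun j => by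
    rw [norm_mul, Real.norm_eq_abs, B.repr_apply_apply, real_inner_comm]
    exact mul_le_mul_of_nonneg_right (hm j) (norm_nonneg _)

def diagonalOp (m : ι → ℝ) (u : E) : E := ∑' j, (m j * ⟪u, B j⟫) • B j

theorem hasSum_diagonalOp (hm : ∀ j, |m j| ≤ C) (u : E) :
    HasSum (fun j => (m j * ⟪u, B j⟫) • B j) (B.diagonalOp m u) :=
  (B.hasSum_repr_symm ⟨_, B.memℓp_mul_inner hm u⟩).summable.hasSum

theorem hasSum_inner_diagonalOp (hm : ∀ j, |m j| ≤ C) (u v : E) :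
    HasSum (fun j => m j * ⟪u, B j⟫ * ⟪v, B j⟫) ⟪v, B.diagonalOp m u⟫ := by
  simpa only [innerSL_apply_apply, inner_smul_right] using
    (B.hasSum_diagonalOp hm u).mapL (innerSL ℝ v)

def diagonalOpₗ (hm : ∀ j, |m j| ≤ C) : E →ₗ[ℝ] E where
  toFun := B.diagonalOp m
  map_add' u v := (B.hasSum_diagonalOp hm (u + v)).unique <| by
    simpa only [inner_add_left, mul_add, add_smul] using
      (B.hasSum_diagonalOp hm u).add (B.hasSum_diagonalOp hm v)
  map_smul' c u := (B.hasSum_diagonalOp hm (c • u)).unique <| by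
    simpa only [real_inner_smul_left, smul_smul, mul_left_comm, RingHom.id_apply] using
      (B.hasSum_diagonalOp hm u).const_smul c

theorem isSymmetric_diagonalOpₗ (hm : ∀ j, |m j| ≤ C) : (B.diagonalOpₗ hm).IsSymmetric :=
  fun u v => by
    change ⟪B.diagonalOp m u, v⟫ = ⟪u, B.diagonalOp m v⟫
    rw [real_inner_comm]
    exact (B.hasSum_inner_diagonalOp hm u v).unique
      ((B.hasSum_inner_diagonalOp hm v u).congr_fun fun j => by ring)

end HilbertBasis

section Indicator

variable {d : ℕ} {Ω ω : Set (EuclideanSpace ℝ (Fin d))} (hω : MeasurableSet ω)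

theorem coeFn_indLp (f : Lp ℝ 2 (volume.restrict Ω)) :
    indLp ω hω f =ᵐ[volume.restrict Ω] ω.indicator f :=
  MemLp.coeFn_toLp _

def indLpₗ : Lp ℝ 2 (volume.restrict Ω) →ₗ[ℝ] Lp ℝ 2 (volume.restrict Ω) where
  toFun := indLp ω hω
  map_add' f g := by
    refine Lp.ext ?_
    filter_upwards [coeFn_indLp hω (f + g), coeFn_indLp hω f, coeFn_indLp hω g,
      Lp.coeFn_add f g, Lp.coeFn_add (indLp ω hω f) (indLp ω hω g)] with x hfg hf hg hadd hadd'
    rw [hfg, hadd', Pi.add_apply, hf, hg]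
    by_cases hx : x ∈ ω
    · rw [indicator_of_mem hx, indicator_of_mem hx, indicator_of_mem hx, hadd, Pi.add_apply]
    · rw [indicator_of_notMem hx, indicator_of_notMem hx, indicator_of_notMem hx, add_zero]
  map_smul' c f := by
    refine Lp.ext ?_
    filter_upwards [coeFn_indLp hω (c • f), coeFn_indLp hω f, Lp.coeFn_smul c f,
      Lp.coeFn_smul c (indLp ω hω f)] with x hcf hf hsmul hsmul'
    rw [RingHom.id_apply, hcf, hsmul', Pi.smul_apply, hf]
    by_cases hx : x ∈ ω
    · rw [indicator_of_mem hx, indicator_of_mem hx, hsmul, Pi.smul_apply]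
    · rw [indicator_of_notMem hx, indicator_of_notMem hx, smul_zero]

theorem isSymmetric_indLpₗ : (indLpₗ (Ω := Ω) hω).IsSymmetric := fun f g => by
  change ⟪indLp ω hω f, g⟫ = ⟪f, indLp ω hω g⟫
  rw [L2.inner_def, L2.inner_def]
  refine integral_congr_ae ?_
  filter_upwards [coeFn_indLp hω f, coeFn_indLp hω g] with x hf hg
  rw [hf, hg]
  by_cases hx : x ∈ ω <;> simp [hx]

theorem indLp_indLp (f : Lp ℝ 2 (volume.restrict Ω)) :
    indLp ω hω (indLp ω hω f) = indLp ω hω f := by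
  refine Lp.ext ?_
  filter_upwards [coeFn_indLp hω (indLp ω hω f), coeFn_indLp hω f] with x hff hf
  rw [hff, hf]
  by_cases hx : x ∈ ω <;> simp [hx, hf]

end Indicator

theorem dual_observation_implies_target_control_general
    (d : ℕ) (Ω ω : Set (EuclideanSpace ℝ (Fin d)))
    (hωm : MeasurableSet ω)
    (B : HilbertBasis ℕ ℝ (Lp ℝ 2 (volume.restrict Ω)))
    (lam : ℕ → ℝ) (hpos : ∀ j, 0 < lam j) (hmono : Monotone lam)
    (T1 T2 : ℝ) (hT12 : T1 < T2)
    (ℓ ε : ℝ) (hℓ : 0 < ℓ) (hε : 0 < ε)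
    -- (O)
    (hO : ∀ u0 : Lp ℝ 2 (volume.restrict Ω),
      (∑' j, (lam j)⁻¹ * ⟪u0, B j⟫ ^ 2) ≤
        ℓ * ‖indLp ω hωm (heatSG B lam (T2 - T1) u0)‖ ^ 2 + ε * ‖u0‖ ^ 2) :
    -- (C)
    ∀ yd : Lp ℝ 2 (volume.restrict Ω),
      Summable (fun j => lam j * ⟪yd, B j⟫ ^ 2) →
      ∃ f : Lp ℝ 2 (volume.restrict Ω),
        (1 / ℓ) * ‖indLp ω hωm f‖ ^ 2 +
          (1 / ε) * ‖heatSG B lam (T2 - T1) (indLp ω hωm f) - yd‖ ^ 2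
        ≤ ∑' j, lam j * ⟪yd, B j⟫ ^ 2 := by
  intro yd hyd
  have hcontraction : ∀ j, |Real.exp (-lam j * (T2 - T1))| ≤ 1 := fun j => by
    rw [abs_of_pos (Real.exp_pos _), Real.exp_le_one_iff]
    nlinarith [hpos j]
  -- `S u` and `R f` unfold to `heatSG B lam (T2 - T1) u` and `indLp ω hωm f`.
  set S := (B.isSymmetric_diagonalOpₗ hcontraction).toSelfAdjoint.1
  set R := (isSymmetric_indLpₗ (Ω := Ω) hωm).toSelfAdjoint.1
  have hadjoint : (S ∘L R)† = R ∘L S := by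
    rw [ContinuousLinearMap.adjoint_comp,
      (B.isSymmetric_diagonalOpₗ hcontraction).toSelfAdjoint.2.adjoint_eq,
      (isSymmetric_indLpₗ hωm).toSelfAdjoint.2.adjoint_eq]
  obtain ⟨f, ⟨u, rfl⟩, hcost⟩ := exists_control_of_observability (S ∘L R) hℓ hε
    (Q := fun u => ∑' j, (lam j)⁻¹ * ⟪u, B j⟫ ^ 2) (fun u => by rw [hadjoint]; exact hO u)
    (fun u => B.two_mul_inner_le_tsum_add_tsum hpos hyd
      (B.summable_inv_mul_inner_sq (hpos 0) (fun j => hmono j.zero_le) u))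
  rw [hadjoint] at hcost
  refine ⟨indLp ω hωm (heatSG B lam (T2 - T1) u), ?_⟩
  nth_rw 1 [indLp_indLp]
  exact hcost

/-- Theorem 3.3, dual observation implies control to a target. -/
theorem dual_observation_implies_target_control
    (d : ℕ) (hd : 1 ≤ d) (Ω ω : Set (EuclideanSpace ℝ (Fin d)))
    (hΩo : IsOpen Ω) (hΩb : Bornology.IsBounded Ω) (hΩc : IsConnected Ω)
    (hωo : IsOpen ω) (hωne : ω.Nonempty) (hωΩ : ω ⊆ Ω) (hωm : MeasurableSet ω)
    (B : HilbertBasis ℕ ℝ (Lp ℝ 2 (volume.restrict Ω)))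
    (lam : ℕ → ℝ) (hpos : ∀ j, 0 < lam j) (hmono : Monotone lam)
    (hlim : Tendsto lam atTop atTop)
    (T0 T1 T2 : ℝ) (hT0 : 0 ≤ T0) (hT01 : T0 < T1) (hT12 : T1 < T2)
    (ℓ ε : ℝ) (hℓ : 0 < ℓ) (hε : 0 < ε)
    -- (O)
    (hO : ∀ u0 : Lp ℝ 2 (volume.restrict Ω),
      (∑' j, (lam j)⁻¹ * ⟪u0, B j⟫ ^ 2) ≤
        ℓ * ‖indLp ω hωm (heatSG B lam (T2 - T1) u0)‖ ^ 2 + ε * ‖u0‖ ^ 2) :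
    -- (C)
    ∀ yd : Lp ℝ 2 (volume.restrict Ω),
      Summable (fun j => lam j * ⟪yd, B j⟫ ^ 2) →
      ∃ f : Lp ℝ 2 (volume.restrict Ω),
        (1 / ℓ) * ‖indLp ω hωm f‖ ^ 2 +
          (1 / ε) * ‖heatSG B lam (T2 - T1) (indLp ω hωm f) - yd‖ ^ 2
        ≤ ∑' j, lam j * ⟪yd, B j⟫ ^ 2 :=
  dual_observation_implies_target_control_general d Ω ω hωm B lam hpos hmono T1 T2 hT12 ℓ ε hℓ hε hO
end
end
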